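/- arXiv:1812.00901 — 7 statements merged into one kernel-verified Lean document; each statement's English description precedes it below -/
import Mathlib

section
/- Let F be a finite field with q elements and let C₁ ⊆ C₂ ⊆ (Fin N → F) be linear codes (submodules) with the same block length N, each containing a nonzero vector, such that Δ(C₂) < Δ(C₁). Then there exists a vector s ∈ (Fin N → F) such that (1) every codeword c ∈ C₁ satisfies hammingDist(s, c) ≥ Δ(C₂), and (2) the cardinality of {c ∈ C₁ : hammingDist(s, c) ≤ Δ(C₂)} multiplied by |C₂| is at least A_{Δ(C₂)}(C₂) multiplied by |C₁|. -/
/-- The minimum distance of a linear code `C`: the least Hamming weight of a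
nonzero codeword of `C`. -/
noncomputable def minDist {N : ℕ} {F : Type*} [Field F] [Fintype F] [DecidableEq F]
    (C : Submodule F (Fin N → F)) : ℕ :=
  sInf {w : ℕ | ∃ c ∈ C, c ≠ 0 ∧ hammingNorm c = w}

/-- `A_w(C)`: the number of codewords of `C` of Hamming weight exactly `w`. -/
noncomputable def weightCount {N : ℕ} {F : Type*} [Field F] [Fintype F] [DecidableEq F]
    (C : Submodule F (Fin N → F)) (w : ℕ) : ℕ :=
  {c : Fin N → F | c ∈ C ∧ hammingNorm c = w}.ncard

/- A minimum-weight codeword `x` of `C₂` lies outside `C₁`, since its weight is below `Δ(C₁)`,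
so `x - c` is a nonzero codeword of `C₂` for every `c ∈ C₁` and `x` is at distance at least
`Δ(C₂)` from `C₁`. Every minimum-weight word `y` of `C₂` in the coset `x + C₁` gives the
codeword `x - y ∈ C₁` at distance exactly `Δ(C₂)` from `x`. Since there are `|C₂| / |C₁|` such
cosets, by pigeonhole one of them carries at least `A_Δ(C₂) · |C₁| / |C₂|` minimum-weight
words; take `x` in it. -/

open Finset

theorem AddSubgroup.exists_card_mul_le_card_filter_sub_mem {G : Type*} [AddCommGroup G]
    {H K : AddSubgroup G} [DecidablePred (· ∈ H)] (hHK : H ≤ K) [Finite K] {S : Finset G}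
    (hSK : ∀ x ∈ S, x ∈ K) (hS : S.Nonempty) :
    ∃ x ∈ S, #S * Nat.card H ≤ #{y ∈ S | x - y ∈ H} * Nat.card K := by
  classical
  let π : G → G ⧸ H := QuotientAddGroup.mk
  have hπ : ∀ x y, π y = π x ↔ x - y ∈ H := fun x y => by
    rw [QuotientAddGroup.eq, neg_add_eq_sub]
  obtain ⟨x, hxS, hmax⟩ := S.exists_max_image (fun x => #{y ∈ S | π y = π x}) hS
  have hfiber : #{y ∈ S | π y = π x} = #{y ∈ S | x - y ∈ H} :=
    congrArg card (filter_congr fun y _ => hπ x y)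
  have hS_le : #S ≤ #{y ∈ S | π y = π x} * #(S.image π) :=
    card_le_mul_card_image S _ fun b hb => by
      obtain ⟨z, hz, rfl⟩ := mem_image.mp hb
      exact hmax z hz
  -- The cosets met by `S` are disjoint translates of `H` inside `K`.
  have himage : Nat.card H * #(S.image π) ≤ Nat.card K := by
    have hpre : π ⁻¹' (S.image π : Set (G ⧸ H)) ⊆ K := by
      intro z hz
      obtain ⟨y, hyS, hyz⟩ := mem_image.mp (mem_coe.mp hz)
      have hyz' : y - z ∈ H := (hπ y z).mp hyz.symm
      simpa using K.sub_mem (hSK y hyS) (hHK hyz')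
    calc Nat.card H * #(S.image π)
        = Nat.card (π ⁻¹' (S.image π : Set (G ⧸ H))) := by
          rw [Nat.card_congr (QuotientAddGroup.preimageMkEquivAddSubgroupProdSet H _),
            Nat.card_prod, Nat.card_coe_set_eq, Set.ncard_coe_finset]
      _ ≤ Nat.card K := Nat.card_mono (Set.toFinite _) hpre
  refine ⟨x, hxS, ?_⟩
  calc #S * Nat.card H ≤ #{y ∈ S | π y = π x} * (Nat.card H * #(S.image π)) := by
        rw [← mul_assoc, mul_right_comm]; gcongr
    _ ≤ #{y ∈ S | x - y ∈ H} * Nat.card K := by rw [hfiber]; gcongr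

theorem hammingDist_self_sub {ι β : Type*} [Fintype ι] [AddCommGroup β] [DecidableEq β]
    (x y : ι → β) : hammingDist x (x - y) = hammingNorm y := by
  rw [hammingDist_comm, hammingDist_eq_hammingNorm, neg_sub, sub_add_cancel]

section MinDist

variable {N : ℕ} {F : Type*} [Field F] [Fintype F] [DecidableEq F] {C : Submodule F (Fin N → F)}

theorem minDist_le_hammingNorm {c : Fin N → F} (hc : c ∈ C) (hc0 : c ≠ 0) :
    minDist C ≤ hammingNorm c :=
  Nat.sInf_le ⟨c, hc, hc0, rfl⟩

theorem minDist_le_hammingDist {u v : Fin N → F} (hu : u ∈ C) (hv : v ∈ C) (huv : u ≠ v) :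
    minDist C ≤ hammingDist u v := by
  rw [hammingDist_eq_hammingNorm]
  exact minDist_le_hammingNorm (C.add_mem (C.neg_mem hu) hv) fun h => huv (neg_add_eq_zero.mp h)

theorem notMem_of_hammingNorm_lt_minDist {c : Fin N → F} (hc0 : c ≠ 0)
    (hc : hammingNorm c < minDist C) : c ∉ C :=
  fun hcC => (minDist_le_hammingNorm hcC hc0).not_gt hc

theorem exists_hammingNorm_eq_minDist (h : ∃ c ∈ C, c ≠ 0) :
    ∃ c ∈ C, c ≠ 0 ∧ hammingNorm c = minDist C := by
  obtain ⟨c, hc, hc0⟩ := h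
  exact Nat.sInf_mem (s := {w | ∃ c ∈ C, c ≠ 0 ∧ hammingNorm c = w}) ⟨_, c, hc, hc0, rfl⟩

theorem minDist_pos (h : ∃ c ∈ C, c ≠ 0) : 0 < minDist C := by
  obtain ⟨c, -, hc0, hc⟩ := exists_hammingNorm_eq_minDist h
  exact hc ▸ hammingNorm_pos_iff.mpr hc0

theorem weightCount_eq_card_filter [DecidablePred (· ∈ C)] (w : ℕ) :
    weightCount C w = #{c | c ∈ C ∧ hammingNorm c = w} := by
  rw [weightCount, ← Set.ncard_coe_finset, coe_filter]
  simp only [mem_univ, true_and]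

end MinDist

theorem stmt_1_general {N : ℕ} {F : Type*} [Field F] [Fintype F] [DecidableEq F]
    (C₁ C₂ : Submodule F (Fin N → F)) (hsub : C₁ ≤ C₂)
    (h2 : ∃ c ∈ C₂, c ≠ 0)
    (hΔ : minDist C₂ < minDist C₁) :
    ∃ s : Fin N → F,
      (∀ c ∈ C₁, minDist C₂ ≤ hammingDist s c) ∧
      {c : Fin N → F | c ∈ C₁ ∧ hammingDist s c ≤ minDist C₂}.ncard * Nat.card C₂
        ≥ weightCount C₂ (minDist C₂) * Nat.card C₁ := by
  classical
  set d := minDist C₂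
  let S : Finset (Fin N → F) := {c | c ∈ C₂ ∧ hammingNorm c = d}
  have hS : S.Nonempty := by
    obtain ⟨c, hc, -, hcd⟩ := exists_hammingNorm_eq_minDist h2
    exact ⟨c, mem_filter.mpr ⟨mem_univ c, hc, hcd⟩⟩
  obtain ⟨x, hxS, hcount⟩ := AddSubgroup.exists_card_mul_le_card_filter_sub_mem
    (H := C₁.toAddSubgroup) (K := C₂.toAddSubgroup) hsub (fun y hy => (mem_filter.mp hy).2.1) hS
  obtain ⟨hxC₂, hxd⟩ : x ∈ C₂ ∧ hammingNorm x = d := (mem_filter.mp hxS).2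
  have hx0 : x ≠ 0 := hammingNorm_pos_iff.mp (hxd ▸ minDist_pos h2)
  have hxC₁ : x ∉ C₁ := notMem_of_hammingNorm_lt_minDist hx0 (hxd ▸ hΔ)
  refine ⟨x, fun c hc =>
    minDist_le_hammingDist hxC₂ (hsub hc) (ne_of_mem_of_not_mem hc hxC₁).symm, ?_⟩
  have hinj : #{y ∈ S | x - y ∈ C₁} ≤
      {c : Fin N → F | c ∈ C₁ ∧ hammingDist x c ≤ d}.ncard := by
    rw [← Set.ncard_coe_finset]
    refine Set.ncard_le_ncard_of_injOn (x - ·) (fun y hy => ?_)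
      (fun a _ b _ h => sub_right_injective h)
    obtain ⟨hyS, hy⟩ := mem_filter.mp hy
    exact ⟨hy, (hammingDist_self_sub x y).trans_le (mem_filter.mp hyS).2.2.le⟩
  rw [weightCount_eq_card_filter]
  exact hcount.trans (Nat.mul_le_mul_right _ hinj)

/-- finding a center via a larger code. -/
theorem stmt_1 {N : ℕ} {F : Type*} [Field F] [Fintype F] [DecidableEq F]
    (C₁ C₂ : Submodule F (Fin N → F)) (hsub : C₁ ≤ C₂)
    (h1 : ∃ c ∈ C₁, c ≠ 0) (h2 : ∃ c ∈ C₂, c ≠ 0)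
    (hΔ : minDist C₂ < minDist C₁) :
    ∃ s : Fin N → F,
      (∀ c ∈ C₁, minDist C₂ ≤ hammingDist s c) ∧
      {c : Fin N → F | c ∈ C₁ ∧ hammingDist s c ≤ minDist C₂}.ncard * Nat.card C₂
        ≥ weightCount C₂ (minDist C₂) * Nat.card C₁ :=
  stmt_1_general C₁ C₂ hsub h2 hΔ
end

section
/- For every real δ with 0 < δ < 1, there exist constants C ≥ 1, c > 0 and s > 0, and a strictly increasing sequence (n_i) of integers with n_i ≥ 2 satisfying log n_{i+1} ≤ C · log n_i for all i, such that for every i there exist a natural number d ≤ (log n_i)^s, finite sets A, B of vectors in (Fin d → Bool) with |A| = |B| = n_i, a set E ⊆ A × B with |E| ≥ c · n_i^{2−δ}, and a positive integer β such that: every pair (a, b) ∈ E has Hamming distance exactly β; every pair (a, b) ∈ (A × B) \ E has Hamming distance strictly greater than β; and any two distinct vectors both in A or both in B have Hamming distance strictly greater than β. -/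
/-!
Over a finite field `F` of size `q`, encode a polynomial `p` by the indicator vector of its graph
`{(x, p x)}` in `F × F`; two such vectors are at Hamming distance twice the number of points where
the polynomials disagree. Let `A` consist of the codes of the polynomials of degree `< t` and `B`
of the codes of the monic ones of degree `t`. Two polynomials on the same side agree in fewer than
`t` points and a cross pair agrees in at most `t`, with equality whenever the difference is
`∏_{s ∈ S} (X - s)` for a `t`-set `S`. So with `β = 2(q - t)` the pairs at distance `β` form a
realized bipartite graph with at least `q^t · (q choose t)` edges. For `t = ⌊q^(δ/2)⌋` and
`n = q^t` this is at least `n^(2-δ)` edges in dimension `q² ≤ (log n)^(4/δ)`, and letting `q`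
run through a chain of primes with `q_{i+1} ≤ 2 q_i` (Bertrand) makes `(n_i)` log-dense.
-/

open Finset Polynomial Real

section Hamming

variable {ι κ α β : Type*}

theorem hammingDist_comp_equiv [Fintype ι] [Fintype κ] [DecidableEq α] (e : ι ≃ κ)
    (x y : κ → α) :
    hammingDist (x ∘ e) (y ∘ e) = hammingDist x y := by
  simp only [hammingDist]
  exact card_equiv e (by simp)

def graphIndicator [DecidableEq β] (f : α → β) : α × β → Bool :=
  fun p => decide (f p.1 = p.2)

theorem graphIndicator_injective [DecidableEq β] :
    Function.Injective (graphIndicator : (α → β) → α × β → Bool) := by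
  intro f g h
  funext x
  simpa [graphIndicator] using congrFun h (x, g x)

theorem card_filter_graphIndicator_ne [Fintype β] [DecidableEq β] (f g : α → β) (x : α) :
    #{y | graphIndicator f (x, y) ≠ graphIndicator g (x, y)} = if f x = g x then 0 else 2 := by
  split_ifs with h
  · simp [graphIndicator, h]
  · rw [← card_pair h]
    congr 1
    ext y
    simp only [graphIndicator, mem_insert, mem_singleton]
    by_cases hf : f x = y <;> by_cases hg : g x = y <;> simp_all [eq_comm]

theorem hammingDist_graphIndicator [Fintype α] [Fintype β] [DecidableEq β] (f g : α → β) :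
    hammingDist (graphIndicator f) (graphIndicator g) = 2 * hammingDist f g := by
  simp only [hammingDist, card_eq_sum_ones, sum_filter, Fintype.sum_prod_type]
  simp only [← sum_filter, ← card_eq_sum_ones, card_filter_graphIndicator_ne]
  rw [card_eq_sum_ones, sum_filter, mul_sum]
  exact sum_congr rfl fun x _ => by split_ifs <;> simp_all

end Hamming

section Realization

variable {ι : Type*} [Fintype ι]

structure IsHammingRealization (A B : Finset (ι → Bool))
    (E : Finset ((ι → Bool) × (ι → Bool))) (β : ℕ) : Prop where
  subset : E ⊆ A ×ˢ B
  pos : 0 < β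
  dist_edge : ∀ ab ∈ E, hammingDist ab.1 ab.2 = β
  lt_dist_nonedge : ∀ a ∈ A, ∀ b ∈ B, (a, b) ∉ E → β < hammingDist a b
  lt_dist_left : ∀ a ∈ A, ∀ a' ∈ A, a ≠ a' → β < hammingDist a a'
  lt_dist_right : ∀ b ∈ B, ∀ b' ∈ B, b ≠ b' → β < hammingDist b b'

theorem isHammingRealization_filter_eq {A B : Finset (ι → Bool)} {β : ℕ}
    (hβ : 0 < β) (hAB : ∀ a ∈ A, ∀ b ∈ B, β ≤ hammingDist a b)
    (hA : ∀ a ∈ A, ∀ a' ∈ A, a ≠ a' → β < hammingDist a a')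
    (hB : ∀ b ∈ B, ∀ b' ∈ B, b ≠ b' → β < hammingDist b b') :
    IsHammingRealization A B {ab ∈ A ×ˢ B | hammingDist ab.1 ab.2 = β} β where
  subset := filter_subset _ _
  pos := hβ
  dist_edge _ hab := (mem_filter.1 hab).2
  lt_dist_nonedge a ha b hb hab :=
    (hAB a ha b hb).lt_of_ne fun h => hab (mem_filter.2 ⟨mem_product.2 ⟨ha, hb⟩, h.symm⟩)
  lt_dist_left := hA
  lt_dist_right := hB

end Realization

section Polynomial

theorem degree_prod_X_sub_C_sub_X_pow_lt {R : Type*} [CommRing R] [IsDomain R] (S : Finset R) :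
    ((∏ s ∈ S, (X - C s)) - X ^ #S).degree < (#S : WithBot ℕ) := by
  have hmonic : (∏ s ∈ S, (X - C s)).Monic := monic_prod_of_monic _ _ fun s _ => monic_X_sub_C s
  have hdeg : (∏ s ∈ S, (X - C s)).degree = (#S : WithBot ℕ) := by simp [degree_prod]
  rw [← hdeg]
  exact degree_sub_lt_left (by rw [hdeg, degree_X_pow]) hmonic.ne_zero
    (by rw [hmonic.leadingCoeff, leadingCoeff_X_pow])

theorem eval_prod_X_sub_C_eq_zero_iff {R : Type*} [CommRing R] [IsDomain R] (S : Finset R) (x : R) :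
    (∏ s ∈ S, (X - C s)).eval x = 0 ↔ x ∈ S := by
  simp [eval_prod, prod_eq_zero_iff, sub_eq_zero]

variable {F : Type*} [Field F] [Fintype F]

theorem eq_of_eval_eq_of_degree_sub_lt {p r : F[X]} (hd : (p - r).degree < Fintype.card F)
    (he : p.eval = r.eval) : p = r :=
  eq_of_degree_sub_lt_of_eval_finset_eq univ (by simpa using hd) fun x _ => congrFun he x

variable [DecidableEq F]

theorem card_sub_natDegree_le_hammingDist_eval {p r : F[X]} (h : p ≠ r) {n : ℕ}
    (hn : (p - r).natDegree ≤ n) : Fintype.card F - n ≤ hammingDist p.eval r.eval := by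
  have hagree : #{x | p.eval x = r.eval x} ≤ n := by
    refine (card_le_degree_of_subset_roots ?_).trans hn
    intro x hx
    rw [mem_roots (sub_ne_zero.2 h), IsRoot, eval_sub, sub_eq_zero]
    simpa using hx
  have := card_filter_add_card_filter_not (s := univ) fun x => p.eval x = r.eval x
  rw [card_univ] at this
  simp only [hammingDist, ne_eq]
  omega

theorem hammingDist_eval_add_prod_X_sub_C (p : F[X]) (S : Finset F) :
    hammingDist p.eval (p + ∏ s ∈ S, (X - C s)).eval = Fintype.card F - #S := by
  rw [← card_compl, hammingDist]
  congr 1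
  ext x
  simp [eval_prod_X_sub_C_eq_zero_iff]

theorem lt_hammingDist_eval_of_degree_sub_lt {p r : F[X]} (h : p ≠ r) {t : ℕ}
    (hd : (p - r).degree < t) (ht : t ≤ Fintype.card F) :
    Fintype.card F - t < hammingDist p.eval r.eval := by
  have := (natDegree_lt_iff_degree_lt (sub_ne_zero.2 h)).2 hd
  have := card_sub_natDegree_le_hammingDist_eval h le_rfl
  omega

theorem card_sub_le_hammingDist_eval_X_pow_add {p r : F[X]} {t : ℕ} (hp : p.degree < t)
    (hr : r.degree < t) : Fintype.card F - t ≤ hammingDist p.eval (X ^ t + r).eval := by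
  have hd : (r - p).degree < t := (degree_sub_le r p).trans_lt (max_lt hr hp)
  have hsub : X ^ t + r - p = X ^ t + (r - p) := by ring
  have hne : X ^ t + r ≠ p := by
    rw [← sub_ne_zero, hsub]
    exact (monic_X_pow_add hd).ne_zero
  rw [hammingDist_comm]
  refine card_sub_natDegree_le_hammingDist_eval hne ?_
  rw [hsub, natDegree_add_eq_left_of_degree_lt (by rwa [degree_X_pow]), natDegree_X_pow]

end Polynomial

section Construction

variable {F : Type*} [Field F] [DecidableEq F] {ι : Type*}

def polyCode (e : F × F ≃ ι) (p : F[X]) : ι → Bool := graphIndicator p.eval ∘ e.symm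

theorem eval_eq_of_polyCode_eq (e : F × F ≃ ι) {p r : F[X]} (h : polyCode e p = polyCode e r) :
    p.eval = r.eval :=
  graphIndicator_injective (e.symm.surjective.injective_comp_right h)

variable [Fintype F]

theorem hammingDist_polyCode [Fintype ι] (e : F × F ≃ ι) (p r : F[X]) :
    hammingDist (polyCode e p) (polyCode e r) = 2 * hammingDist p.eval r.eval := by
  rw [polyCode, polyCode, hammingDist_comp_equiv, hammingDist_graphIndicator]

variable (F) in
noncomputable def degreeLTFinset (t : ℕ) : Finset F[X] :=
  univ.image fun a : Fin t → F => ((degreeLTEquiv F t).symm a : F[X])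

theorem mem_degreeLTFinset {t : ℕ} {p : F[X]} : p ∈ degreeLTFinset F t ↔ p.degree < t := by
  rw [← mem_degreeLT, degreeLTFinset, mem_image]
  refine ⟨?_, fun hp => ⟨degreeLTEquiv F t ⟨p, hp⟩, mem_univ _, by simp⟩⟩
  rintro ⟨a, -, rfl⟩
  exact Subtype.prop _

theorem card_degreeLTFinset (t : ℕ) : #(degreeLTFinset F t) = Fintype.card F ^ t := by
  rw [degreeLTFinset, card_image_of_injective, card_univ, Fintype.card_fun, Fintype.card_fin]
  exact Subtype.val_injective.comp (degreeLTEquiv F t).symm.injective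

theorem eq_of_polyCode_eq (e : F × F ≃ ι) {p r : F[X]} (hd : (p - r).degree < Fintype.card F)
    (h : polyCode e p = polyCode e r) : p = r :=
  eq_of_eval_eq_of_degree_sub_lt hd (eval_eq_of_polyCode_eq e h)

theorem degree_sub_lt_of_mem_degreeLTFinset {t : ℕ} {p r : F[X]} (hp : p ∈ degreeLTFinset F t)
    (hr : r ∈ degreeLTFinset F t) : (p - r).degree < t :=
  (degree_sub_le p r).trans_lt (max_lt (mem_degreeLTFinset.1 hp) (mem_degreeLTFinset.1 hr))

variable [Fintype ι] (e : F × F ≃ ι) (t : ℕ)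

noncomputable def lowCodes : Finset (ι → Bool) := (degreeLTFinset F t).image (polyCode e)

noncomputable def monicCodes : Finset (ι → Bool) :=
  (degreeLTFinset F t).image fun r => polyCode e (X ^ t + r)

noncomputable def hammingEdges (β : ℕ) : Finset ((ι → Bool) × (ι → Bool)) :=
  {ab ∈ lowCodes e t ×ˢ monicCodes e t | hammingDist ab.1 ab.2 = β}

variable {t}

theorem degree_sub_lt_card_of_mem_degreeLTFinset (ht : t ≤ Fintype.card F) {p r : F[X]}
    (hp : p ∈ degreeLTFinset F t) (hr : r ∈ degreeLTFinset F t) :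
    (p - r).degree < Fintype.card F :=
  (degree_sub_lt_of_mem_degreeLTFinset hp hr).trans_le (by exact_mod_cast ht)

theorem card_lowCodes (ht : t ≤ Fintype.card F) : #(lowCodes e t) = Fintype.card F ^ t := by
  rw [lowCodes, card_image_of_injOn fun p hp p' hp' h =>
    eq_of_polyCode_eq e (degree_sub_lt_card_of_mem_degreeLTFinset ht hp hp') h, card_degreeLTFinset]

theorem card_monicCodes (ht : t ≤ Fintype.card F) : #(monicCodes e t) = Fintype.card F ^ t := by
  refine (card_image_of_injOn fun r hr r' hr' h => add_left_cancel (eq_of_polyCode_eq e ?_ h)).trans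
    (card_degreeLTFinset t)
  rw [add_sub_add_left_eq_sub]
  exact degree_sub_lt_card_of_mem_degreeLTFinset ht hr hr'

theorem isHammingRealization_hammingEdges (htq : t < Fintype.card F) :
    IsHammingRealization (lowCodes e t) (monicCodes e t)
      (hammingEdges e t (2 * (Fintype.card F - t))) (2 * (Fintype.card F - t)) := by
  refine isHammingRealization_filter_eq (by omega) ?_ ?_ ?_
  · simp only [lowCodes, monicCodes, forall_mem_image, hammingDist_polyCode]
    intro p hp r hr
    have := card_sub_le_hammingDist_eval_X_pow_add (mem_degreeLTFinset.1 hp)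
      (mem_degreeLTFinset.1 hr)
    omega
  · simp only [lowCodes, forall_mem_image, hammingDist_polyCode]
    intro p hp p' hp' hne
    have := lt_hammingDist_eval_of_degree_sub_lt (fun h => hne (by rw [h]))
      (degree_sub_lt_of_mem_degreeLTFinset hp hp') htq.le
    omega
  · simp only [monicCodes, forall_mem_image, hammingDist_polyCode]
    intro r hr r' hr' hne
    have := lt_hammingDist_eval_of_degree_sub_lt (fun h => hne (by rw [h]))
      ((add_sub_add_left_eq_sub r r' _).symm ▸ degree_sub_lt_of_mem_degreeLTFinset hr hr') htq.le
    omega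

theorem card_mul_choose_le_card_hammingEdges (ht : t ≤ Fintype.card F) :
    Fintype.card F ^ t * (Fintype.card F).choose t ≤
      #(hammingEdges e t (2 * (Fintype.card F - t))) := by
  set pairs := degreeLTFinset F t ×ˢ powersetCard t (univ : Finset F)
  let edge (pS : F[X] × Finset F) : (ι → Bool) × (ι → Bool) :=
    (polyCode e pS.1, polyCode e (pS.1 + ∏ s ∈ pS.2, (X - C s)))
  have hmaps : ∀ pS ∈ pairs, edge pS ∈ hammingEdges e t (2 * (Fintype.card F - t)) := by
    rintro ⟨p, S⟩ hpS
    obtain ⟨hp, hS⟩ := mem_product.1 hpS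
    obtain hS : #S = t := (mem_powersetCard.1 hS).2
    have hlow : p + ((∏ s ∈ S, (X - C s)) - X ^ t) ∈ degreeLTFinset F t := by
      refine mem_degreeLTFinset.2 ((degree_add_le _ _).trans_lt (max_lt ?_ ?_))
      · exact mem_degreeLTFinset.1 hp
      · simpa [hS] using degree_prod_X_sub_C_sub_X_pow_lt S
    refine mem_filter.2 ⟨mem_product.2 ⟨mem_image_of_mem _ hp,
      mem_image.2 ⟨_, hlow, congrArg (polyCode e) (by ring)⟩⟩, ?_⟩
    simp only [edge, hammingDist_polyCode, hammingDist_eval_add_prod_X_sub_C, hS]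
  -- `S` is recovered from the edge as the set where its two endpoints' functions agree.
  have hinj : Set.InjOn edge pairs := by
    rintro ⟨p, S⟩ hpS ⟨p', S'⟩ hpS' h
    obtain ⟨h₁, h₂⟩ := Prod.ext_iff.1 h
    obtain rfl : p = p' := eq_of_polyCode_eq e (degree_sub_lt_card_of_mem_degreeLTFinset ht
      (mem_product.1 hpS).1 (mem_product.1 hpS').1) h₁
    refine Prod.ext rfl (Finset.ext fun x => ?_)
    have := congrFun (eval_eq_of_polyCode_eq e h₂) x
    simp only [eval_add, add_right_inj] at this
    rw [← eval_prod_X_sub_C_eq_zero_iff, this, eval_prod_X_sub_C_eq_zero_iff]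
  calc Fintype.card F ^ t * (Fintype.card F).choose t = #pairs := by
        rw [card_product, card_degreeLTFinset, card_powersetCard, card_univ]
    _ ≤ _ := card_le_card_of_injOn edge hmaps hinj

end Construction

theorem div_pow_le_choose (n r : ℕ) : (((n + 1 - r : ℕ) : ℝ) / r) ^ r ≤ n.choose r := by
  calc (((n + 1 - r : ℕ) : ℝ) / r) ^ r = ((n + 1 - r : ℕ) : ℝ) ^ r / (r : ℝ) ^ r :=
        div_pow _ _ _
    _ ≤ ((n + 1 - r : ℕ) : ℝ) ^ r / r.factorial :=
      div_le_div_of_nonneg_left (by positivity) (by exact_mod_cast r.factorial_pos)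
        (by exact_mod_cast r.factorial_le_pow)
    _ ≤ n.choose r := by exact_mod_cast Nat.pow_le_choose r n

noncomputable def polyDegree (δ : ℝ) (q : ℕ) : ℕ := ⌊(q : ℝ) ^ (δ / 2)⌋₊

section Asymptotics

variable {δ : ℝ} {q : ℕ}

theorem polyDegree_le : (polyDegree δ q : ℝ) ≤ (q : ℝ) ^ (δ / 2) :=
  Nat.floor_le (by positivity)

variable (hq : 4 ≤ (q : ℝ) ^ (δ / 2))
include hq

theorem four_le_polyDegree : 4 ≤ polyDegree δ q := Nat.le_floor (by exact_mod_cast hq)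

theorem rpow_le_two_mul_polyDegree : (q : ℝ) ^ (δ / 2) ≤ 2 * polyDegree δ q := by
  have h1 := Nat.lt_floor_add_one ((q : ℝ) ^ (δ / 2))
  have h2 : (4 : ℝ) ≤ polyDegree δ q := by exact_mod_cast four_le_polyDegree hq
  rw [polyDegree] at h2 ⊢
  linarith

theorem rpow_half_le_sqrt (hδ1 : δ < 1) : (q : ℝ) ^ (δ / 2) ≤ √q := by
  have hq1 : (1 : ℝ) ≤ q := by
    rcases Nat.eq_zero_or_pos q with rfl | h
    · have := zero_rpow_le_one (δ / 2)
      push_cast at hq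
      linarith
    · exact_mod_cast h
  rw [sqrt_eq_rpow]
  exact rpow_le_rpow_of_exponent_le hq1 (by linarith)

theorem sixteen_le (hδ1 : δ < 1) : (16 : ℝ) ≤ q := by
  have := hq.trans (rpow_half_le_sqrt hq hδ1)
  rw [le_sqrt (by norm_num) (by positivity)] at this
  linarith

theorem polyDegree_lt (hδ1 : δ < 1) : polyDegree δ q < q := by
  have h16 := sixteen_le hq hδ1
  have hsq : √(q : ℝ) < q := sqrt_lt_self_iff.2 (by linarith)
  exact_mod_cast polyDegree_le.trans_lt ((rpow_half_le_sqrt hq hδ1).trans_lt hsq)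

theorem two_le_log (hδ1 : δ < 1) : 2 ≤ log q := by
  have h16 := sixteen_le hq hδ1
  rw [le_log_iff_exp_le (by linarith), show (2 : ℝ) = 1 + 1 by norm_num, exp_add]
  nlinarith [exp_one_lt_three, exp_pos 1]

theorem sq_le_log_pow_polyDegree_rpow (hδ0 : 0 < δ) (hδ1 : δ < 1) :
    ((q * q : ℕ) : ℝ) ≤ log ((q ^ polyDegree δ q : ℕ) : ℝ) ^ (4 / δ) := by
  have hlog : (q : ℝ) ^ (δ / 2) ≤ log ((q ^ polyDegree δ q : ℕ) : ℝ) := by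
    rw [Nat.cast_pow, log_pow]
    nlinarith [rpow_le_two_mul_polyDegree hq, two_le_log hq hδ1,
      (polyDegree δ q).cast_nonneg (α := ℝ)]
  calc ((q * q : ℕ) : ℝ) = ((q : ℝ) ^ (δ / 2)) ^ (4 / δ) := by
        rw [← rpow_mul (by positivity),
          show δ / 2 * (4 / δ) = (2 : ℕ) by field_simp; norm_num, rpow_natCast]
        push_cast
        ring
    _ ≤ _ := rpow_le_rpow (by positivity) hlog (by positivity)

theorem log_pow_polyDegree_le (hδ0 : 0 < δ) (hδ1 : δ < 1) {q' : ℕ} (hqq' : q ≤ q')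
    (hq' : q' ≤ 2 * q) :
    log ((q' ^ polyDegree δ q' : ℕ) : ℝ) ≤ 8 * log ((q ^ polyDegree δ q : ℕ) : ℝ) := by
  have h16 := sixteen_le hq hδ1
  have hq'r : (q' : ℝ) ≤ 2 * q := by exact_mod_cast hq'
  have hqq'r : (q : ℝ) ≤ q' := by exact_mod_cast hqq'
  have hq'0 : (0 : ℝ) < q' := by linarith
  have hdeg : (polyDegree δ q' : ℝ) ≤ 4 * polyDegree δ q :=
    calc (polyDegree δ q' : ℝ) ≤ (2 * (q : ℝ)) ^ (δ / 2) :=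
          polyDegree_le.trans (rpow_le_rpow hq'0.le hq'r (by positivity))
      _ = 2 ^ (δ / 2) * (q : ℝ) ^ (δ / 2) := mul_rpow (by norm_num) (by positivity)
      _ ≤ 2 * (2 * polyDegree δ q) := by
          gcongr
          · exact rpow_le_self_of_one_le (by norm_num) (by linarith)
          · exact rpow_le_two_mul_polyDegree hq
      _ = 4 * polyDegree δ q := by ring
  have hlog : log q' ≤ 2 * log q := by
    calc log q' ≤ log (2 * q) := log_le_log hq'0 hq'r
      _ = log 2 + log q := log_mul (by norm_num) (by positivity)
      _ ≤ 2 * log q := by linarith [log_le_log (by norm_num) (by linarith : (2 : ℝ) ≤ q)]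
  simp only [Nat.cast_pow, log_pow]
  nlinarith [two_le_log hq hδ1, log_nonneg (by linarith : (1 : ℝ) ≤ q'),
    (polyDegree δ q).cast_nonneg (α := ℝ), (polyDegree δ q').cast_nonneg (α := ℝ)]

theorem polyDegree_mul_rpow_le (hδ1 : δ < 1) :
    (polyDegree δ q : ℝ) * (q : ℝ) ^ (1 - δ) ≤ q / 4 := by
  have hq0 : (0 : ℝ) < q := by linarith [sixteen_le hq hδ1]
  have hsplit : (q : ℝ) ^ (δ / 2) * (q : ℝ) ^ (1 - δ) * (q : ℝ) ^ (δ / 2) = q := by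
    rw [← rpow_add hq0, ← rpow_add hq0, show δ / 2 + (1 - δ) + δ / 2 = 1 by ring, rpow_one]
  have hB : 0 ≤ (q : ℝ) ^ (δ / 2) * (q : ℝ) ^ (1 - δ) := by positivity
  calc (polyDegree δ q : ℝ) * (q : ℝ) ^ (1 - δ)
        ≤ (q : ℝ) ^ (δ / 2) * (q : ℝ) ^ (1 - δ) := by
          gcongr
          exact polyDegree_le
    _ ≤ q / 4 := by nlinarith

theorem rpow_two_sub_le_mul_choose (hδ1 : δ < 1) :
    ((q ^ polyDegree δ q : ℕ) : ℝ) ^ (2 - δ) ≤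
      ((q ^ polyDegree δ q * q.choose (polyDegree δ q) : ℕ) : ℝ) := by
  set t := polyDegree δ q
  have hq1 : (1 : ℝ) ≤ q := by linarith [sixteen_le hq hδ1]
  have ht : (1 : ℝ) ≤ t := by exact_mod_cast (four_le_polyDegree hq).trans' (by norm_num)
  have htq : t ≤ q + 1 := (polyDegree_lt hq hδ1).le.trans q.le_succ
  have hB1 : 1 ≤ (q : ℝ) ^ (1 - δ) := one_le_rpow hq1 (by linarith)
  have hbase : (q : ℝ) ^ (1 - δ) ≤ ((q + 1 - t : ℕ) : ℝ) / t := by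
    rw [le_div_iff₀ (by linarith), Nat.cast_sub htq]
    push_cast
    nlinarith [polyDegree_mul_rpow_le hq hδ1]
  have hchoose : ((q : ℝ) ^ (1 - δ)) ^ t ≤ q.choose t :=
    (pow_le_pow_left₀ (by positivity) hbase t).trans (div_pow_le_choose q t)
  calc ((q ^ t : ℕ) : ℝ) ^ (2 - δ) = (q : ℝ) ^ t * ((q : ℝ) ^ (1 - δ)) ^ t := by
        rw [Nat.cast_pow, ← rpow_pow_comm (by positivity), ← mul_pow,
          ← rpow_one_add' (by positivity) (by linarith), show 1 + (1 - δ) = 2 - δ by ring]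
    _ ≤ (q : ℝ) ^ t * q.choose t := by gcongr
    _ = ((q ^ t * q.choose t : ℕ) : ℝ) := by push_cast; ring

theorem pow_polyDegree_lt_pow_polyDegree (hδ0 : 0 < δ) {q' : ℕ} (hqq' : q < q') :
    q ^ polyDegree δ q < q' ^ polyDegree δ q' := by
  have ht : polyDegree δ q ≤ polyDegree δ q' :=
    Nat.floor_le_floor (rpow_le_rpow (by positivity) (by exact_mod_cast hqq'.le) (by positivity))
  calc q ^ polyDegree δ q < q' ^ polyDegree δ q :=
        Nat.pow_lt_pow_left hqq' (by have := four_le_polyDegree hq; omega)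
    _ ≤ q' ^ polyDegree δ q' := Nat.pow_le_pow_right (by omega) ht

theorem two_le_pow_polyDegree (hδ1 : δ < 1) : 2 ≤ q ^ polyDegree δ q := by
  have h16 : 16 ≤ q := by exact_mod_cast sixteen_le hq hδ1
  calc 2 ≤ q := by omega
    _ ≤ q ^ polyDegree δ q := Nat.le_self_pow (by have := four_le_polyDegree hq; omega) q

end Asymptotics

theorem exists_prime_seq_le_two_mul (N : ℕ) :
    ∃ q : ℕ → ℕ, (∀ i, (q i).Prime) ∧ N ≤ q 0 ∧
      ∀ i, q i < q (i + 1) ∧ q (i + 1) ≤ 2 * q i := by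
  have hnext (m : ℕ) : ∃ p, m ≠ 0 → p.Prime ∧ m < p ∧ p ≤ 2 * m := by
    rcases eq_or_ne m 0 with rfl | hm
    · exact ⟨0, fun h => absurd rfl h⟩
    · obtain ⟨p, hp⟩ := Nat.exists_prime_lt_and_le_two_mul m hm
      exact ⟨p, fun _ => hp⟩
  choose next hnext using hnext
  obtain ⟨p₀, hN, hp₀⟩ := Nat.exists_infinite_primes N
  have hprime : ∀ i, (next^[i] p₀).Prime := by
    intro i
    induction i with
    | zero => exact hp₀
    | succ i ih => rw [Function.iterate_succ_apply']; exact (hnext _ ih.ne_zero).1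
  refine ⟨fun i => next^[i] p₀, hprime, hN, fun i => ?_⟩
  simp only [Function.iterate_succ_apply']
  exact (hnext _ (hprime i).ne_zero).2

/-- for every `0 < δ < 1` there is a log-dense sequence `(n_i)` of sizes
for which there are dense bipartite graphs on `n_i + n_i` Boolean vectors in dimension
`(log n_i)^s` with at least `c · n_i^{2-δ}` edges, realized in the Hamming metric:
edges at distance exactly `β`, all other (cross or same-side) distinct pairs at
distance strictly greater than `β`. -/
theorem stmt_7 (δ : ℝ) (hδ0 : 0 < δ) (hδ1 : δ < 1) :
    ∃ (C c s : ℝ) (n : ℕ → ℕ),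
      1 ≤ C ∧ 0 < c ∧ 0 < s ∧
      StrictMono n ∧ (∀ i, 2 ≤ n i) ∧
      (∀ i, Real.log (n (i + 1)) ≤ C * Real.log (n i)) ∧
      (∀ i, ∃ (d : ℕ) (A B : Finset (Fin d → Bool))
          (E : Finset ((Fin d → Bool) × (Fin d → Bool))) (β : ℕ),
        (d : ℝ) ≤ Real.log (n i) ^ s ∧
        A.card = n i ∧ B.card = n i ∧
        E ⊆ A ×ˢ B ∧
        c * (n i : ℝ) ^ (2 - δ) ≤ (E.card : ℝ) ∧
        0 < β ∧
        (∀ ab ∈ E, hammingDist ab.1 ab.2 = β) ∧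
        (∀ a ∈ A, ∀ b ∈ B, (a, b) ∉ E → β < hammingDist a b) ∧
        (∀ a ∈ A, ∀ a' ∈ A, a ≠ a' → β < hammingDist a a') ∧
        (∀ b ∈ B, ∀ b' ∈ B, b ≠ b' → β < hammingDist b b')) := by
  obtain ⟨N, hN⟩ := ((tendsto_rpow_atTop (by positivity : 0 < δ / 2)).comp
    tendsto_natCast_atTop_atTop).eventually_ge_atTop (4 : ℝ) |>.exists
  obtain ⟨q, hprime, hq0, hstep⟩ := exists_prime_seq_le_two_mul N
  have hmono : StrictMono q := strictMono_nat_of_lt_succ fun i => (hstep i).1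
  have hq (i : ℕ) : 4 ≤ (q i : ℝ) ^ (δ / 2) := hN.trans (rpow_le_rpow (by positivity)
    (by exact_mod_cast hq0.trans (hmono.monotone i.zero_le)) (by positivity))
  refine ⟨8, 1, 4 / δ, fun i => q i ^ polyDegree δ (q i), by norm_num, one_pos, by positivity,
    strictMono_nat_of_lt_succ fun i => pow_polyDegree_lt_pow_polyDegree (hq i) hδ0 (hstep i).1,
    fun i => two_le_pow_polyDegree (hq i) hδ1,
    fun i => log_pow_polyDegree_le (hq i) hδ0 hδ1 (hstep i).1.le (hstep i).2, fun i => ?_⟩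
  have := Fact.mk (hprime i)
  have hcard : Fintype.card (ZMod (q i)) = q i := ZMod.card _
  have htq : polyDegree δ (q i) < Fintype.card (ZMod (q i)) := by
    rw [hcard]
    exact polyDegree_lt (hq i) hδ1
  obtain ⟨e⟩ : Nonempty (ZMod (q i) × ZMod (q i) ≃ Fin (q i * q i)) :=
    ⟨Fintype.equivFinOfCardEq (by simp)⟩
  have hreal := isHammingRealization_hammingEdges e htq
  refine ⟨q i * q i, _, _, _, _, sq_le_log_pow_polyDegree_rpow (hq i) hδ0 hδ1,
    (card_lowCodes e htq.le).trans (by rw [hcard]),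
    (card_monicCodes e htq.le).trans (by rw [hcard]), hreal.subset, ?_, hreal.pos,
    hreal.dist_edge, hreal.lt_dist_nonedge, hreal.lt_dist_left, hreal.lt_dist_right⟩
  have hedges := card_mul_choose_le_card_hammingEdges e htq.le
  rw [hcard] at hedges ⊢
  rw [one_mul]
  exact (rpow_two_sub_le_mul_choose (hq i) hδ1).trans (by exact_mod_cast hedges)
end

section
/- For every real δ with 0 < δ < 1, there exist constants C ≥ 1, c > 0 and s > 0, and a strictly increasing sequence (n_i) of integers with n_i ≥ 2 satisfying log n_{i+1} ≤ C · log n_i for all i, such that for every i there exist a natural number d ≤ (log n_i)^s, finite sets A, B of vectors in (Fin d → Bool) with |A| = |B| = n_i, a set E ⊆ A × B with |E| ≥ c · n_i^{2−δ}, and a positive integer β such that: every pair (a, b) ∈ E has inner product ⟨a, b⟩ = β; every pair (a, b) ∈ (A × B) \ E has ⟨a, b⟩ < β; and any two distinct vectors both in A or both in B have inner product strictly less than β/3. -/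
/-!
Index coordinates by `F_q × F_q` and send a polynomial `p` to the indicator vector of its graph
`{(x, p x)}`; then `⟨graph p, graph p'⟩` is the number of roots of `p - p'`. Take for `A` the
graphs of the `q ^ k` polynomials of degree `< k`, and for `B` the graphs of `l - P` for the
same `l` and a fixed `P` of degree `β = 3k`. Same-side products are then `< k = β / 3` and cross
products are `≤ β`, with equality exactly when `l - l' + P` splits into distinct linear factors.

To get many edges, pigeonhole the split polynomials `∏_{s ∈ S} (X - s)`, `#S = 3k`, by their
coefficients of degree `≥ k`: some `P` agrees above degree `k` with `choose q (3k) / q ^ (2k+1)`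
of them, and each one gives `q ^ k` edges. With `k = a j`, `a δ ≥ 1`, and a prime
`q ∈ (k ^ (12a), 2 k ^ (12a)]`, this is at least `n ^ (2 - δ)` for `n = q ^ k`, while the
dimension `q ^ 2` is polylogarithmic in `n`. Doubling `j` and using Bertrand's postulate makes the
sizes `n` a log-dense sequence.
-/

/-- The inner product of two Boolean vectors: the number of coordinates where both
are `true`. -/
def boolIP {d : ℕ} (u v : Fin d → Bool) : ℕ :=
  (Finset.univ.filter (fun i => u i = true ∧ v i = true)).card

open Polynomial Finset
open scoped Nat

namespace GapIP

/-- `(A, B)` `(β, 3)`-gap-IP-realizes the bipartite graph with edge set `E`. -/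
structure IsGapIPRealization {d : ℕ} (β : ℕ) (A B : Finset (Fin d → Bool))
    (E : Finset ((Fin d → Bool) × (Fin d → Bool))) : Prop where
  subset : E ⊆ A ×ˢ B
  boolIP_eq_of_mem : ∀ ab ∈ E, boolIP ab.1 ab.2 = β
  boolIP_lt_of_notMem : ∀ a ∈ A, ∀ b ∈ B, (a, b) ∉ E → boolIP a b < β
  boolIP_lt_left : ∀ a ∈ A, ∀ a' ∈ A, a ≠ a' → (boolIP a a' : ℝ) < β / 3
  boolIP_lt_right : ∀ b ∈ B, ∀ b' ∈ B, b ≠ b' → (boolIP b b' : ℝ) < β / 3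

theorem degree_prod_X_sub_C {R : Type*} [CommRing R] [Nontrivial R] (S : Finset R) :
    (∏ s ∈ S, (X - C s)).degree = (#S : WithBot ℕ) := by
  rw [degree_eq_natDegree (monic_prod_of_monic _ _ fun s _ => monic_X_sub_C s).ne_zero,
    natDegree_finsetProd_X_sub_C_eq_card S (fun s => s)]

section FiniteField

variable {F : Type*} [Field F] [Fintype F]

variable (F) in
noncomputable def polysDegreeLT (k : ℕ) : Finset F[X] :=
  univ.map ((degreeLTEquiv F k).symm.toEquiv.toEmbedding.trans (Function.Embedding.subtype _))

theorem mem_polysDegreeLT {k : ℕ} {p : F[X]} : p ∈ polysDegreeLT F k ↔ p ∈ degreeLT F k := by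
  simp only [polysDegreeLT, mem_map, mem_univ, true_and]
  exact ⟨fun ⟨c, hc⟩ => hc ▸ Subtype.prop _,
    fun hp => ⟨degreeLTEquiv F k ⟨p, hp⟩, by simp⟩⟩

theorem card_polysDegreeLT (k : ℕ) : #(polysDegreeLT F k) = Fintype.card F ^ k := by
  simp [polysDegreeLT]

theorem degree_sub_lt_of_mem_polysDegreeLT {k : ℕ} {l l' : F[X]} (hl : l ∈ polysDegreeLT F k)
    (hl' : l' ∈ polysDegreeLT F k) : (l - l').degree < k :=
  mem_degreeLT.mp <| sub_mem (mem_polysDegreeLT.mp hl) (mem_polysDegreeLT.mp hl')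

variable [DecidableEq F]

noncomputable def graphVec (p : F[X]) : Fin (Fintype.card (F × F)) → Bool :=
  fun i => decide (p.eval ((Fintype.equivFin (F × F)).symm i).1 =
    ((Fintype.equivFin (F × F)).symm i).2)

theorem boolIP_graphVec (p p' : F[X]) :
    boolIP (graphVec p) (graphVec p') = #{x | p.eval x = p'.eval x} := by
  set e := (Fintype.equivFin (F × F)).symm
  have hmem (i) : i ∈ ({i | graphVec p i = true ∧ graphVec p' i = true} : Finset _) ↔
      p.eval (e i).1 = (e i).2 ∧ p'.eval (e i).1 = (e i).2 := by
    simp [graphVec, e]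
  refine card_nbij' (fun i => (e i).1) (fun x => e.symm (x, p.eval x)) ?_ ?_ ?_ ?_
  · intro i hi
    rw [mem_coe, hmem] at hi
    simp [hi.1, hi.2]
  · intro x hx
    rw [mem_coe, hmem]
    simpa using (mem_filter.mp hx).2.symm
  · intro i hi
    rw [mem_coe, hmem] at hi
    simp [hi.1]
  · intro x _
    simp

theorem boolIP_graphVec_self (p : F[X]) :
    boolIP (graphVec p) (graphVec p) = Fintype.card F := by
  simp [boolIP_graphVec]

theorem boolIP_graphVec_le_natDegree {p p' : F[X]} (h : p ≠ p') :
    boolIP (graphVec p) (graphVec p') ≤ (p - p').natDegree := by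
  rw [boolIP_graphVec]
  refine card_le_degree_of_subset_roots fun x hx => ?_
  rw [mem_roots (sub_ne_zero.mpr h), IsRoot, eval_sub, sub_eq_zero]
  exact (mem_filter.mp hx).2

theorem boolIP_graphVec_lt {p p' : F[X]} {n : ℕ} (h : p ≠ p') (hn : (p - p').degree < n) :
    boolIP (graphVec p) (graphVec p') < n :=
  (boolIP_graphVec_le_natDegree h).trans_lt <|
    (natDegree_lt_iff_degree_lt (sub_ne_zero.mpr h)).mpr hn

theorem eq_of_graphVec_eq {p p' : F[X]} (hn : (p - p').degree < Fintype.card F)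
    (h : graphVec p = graphVec p') : p = p' := by
  by_contra hne
  have := boolIP_graphVec_lt hne hn
  rw [← h, boolIP_graphVec_self] at this
  exact this.false

theorem filter_eval_prod_X_sub_C_eq_zero (S : Finset F) :
    ({x | (∏ s ∈ S, (X - C s)).eval x = 0} : Finset F) = S := by
  ext x
  simp [eval_prod, prod_eq_zero_iff, sub_eq_zero]

variable (F) in
noncomputable def leftVecs (k : ℕ) : Finset (Fin (Fintype.card (F × F)) → Bool) :=
  (polysDegreeLT F k).image graphVec

noncomputable def rightVecs (k : ℕ) (P : F[X]) : Finset (Fin (Fintype.card (F × F)) → Bool) :=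
  (polysDegreeLT F k).image fun l => graphVec (l - P)

theorem card_leftVecs {k : ℕ} (hk : k ≤ Fintype.card F) :
    #(leftVecs F k) = Fintype.card F ^ k := by
  rw [leftVecs, card_image_of_injOn, card_polysDegreeLT]
  intro l hl l' hl' h
  exact eq_of_graphVec_eq ((degree_sub_lt_of_mem_polysDegreeLT hl hl').trans_le
    (by exact_mod_cast hk)) h

theorem card_rightVecs {k : ℕ} (hk : k ≤ Fintype.card F) (P : F[X]) :
    #(rightVecs k P) = Fintype.card F ^ k := by
  rw [rightVecs, card_image_of_injOn, card_polysDegreeLT]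
  intro l hl l' hl' h
  refine sub_left_injective (eq_of_graphVec_eq ?_ h)
  rw [sub_sub_sub_cancel_right]
  exact (degree_sub_lt_of_mem_polysDegreeLT hl hl').trans_le (by exact_mod_cast hk)

theorem boolIP_lt_of_mem_leftVecs {k : ℕ} {a a' : Fin (Fintype.card (F × F)) → Bool}
    (ha : a ∈ leftVecs F k) (ha' : a' ∈ leftVecs F k) (hne : a ≠ a') : boolIP a a' < k := by
  obtain ⟨l, hl, rfl⟩ := mem_image.mp ha
  obtain ⟨l', hl', rfl⟩ := mem_image.mp ha'
  exact boolIP_graphVec_lt (ne_of_apply_ne _ hne) (degree_sub_lt_of_mem_polysDegreeLT hl hl')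

theorem boolIP_lt_of_mem_rightVecs {k : ℕ} {P : F[X]} {b b' : Fin (Fintype.card (F × F)) → Bool}
    (hb : b ∈ rightVecs k P) (hb' : b' ∈ rightVecs k P) (hne : b ≠ b') : boolIP b b' < k := by
  obtain ⟨l, hl, rfl⟩ := mem_image.mp hb
  obtain ⟨l', hl', rfl⟩ := mem_image.mp hb'
  refine boolIP_graphVec_lt (ne_of_apply_ne _ hne) ?_
  rw [sub_sub_sub_cancel_right]
  exact degree_sub_lt_of_mem_polysDegreeLT hl hl'

theorem boolIP_le_of_mem_leftVecs_of_mem_rightVecs {k β : ℕ} {P : F[X]} (hP : P.degree = β)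
    (hk : k ≤ β) {a b : Fin (Fintype.card (F × F)) → Bool} (ha : a ∈ leftVecs F k)
    (hb : b ∈ rightVecs k P) : boolIP a b ≤ β := by
  obtain ⟨l, hl, rfl⟩ := mem_image.mp ha
  obtain ⟨l', hl', rfl⟩ := mem_image.mp hb
  have hdeg : (l - (l' - P)).degree = β := by
    rw [sub_sub_eq_add_sub, add_sub_right_comm, degree_add_eq_right_of_degree_lt, hP]
    exact hP ▸ (degree_sub_lt_of_mem_polysDegreeLT hl hl').trans_le (by exact_mod_cast hk)
  have hne : l ≠ l' - P := fun h => by simp [h] at hdeg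
  exact (boolIP_graphVec_le_natDegree hne).trans (natDegree_eq_of_degree_eq_some hdeg).le

/-- Each split polynomial `∏ s ∈ S, (X - C s)` that agrees with `P` above degree `k` yields
`card F ^ k` edges `(graphVec l, graphVec (l - ∏ s ∈ S, (X - C s)))`, one for each `l`. -/
theorem card_pow_mul_le_card_edges {k β : ℕ} (hk : k ≤ Fintype.card F) (P : F[X])
    (𝒮 : Finset (Finset F))
    (h𝒮 : ∀ S ∈ 𝒮, #S = β ∧ (∏ s ∈ S, (X - C s)) - P ∈ degreeLT F k) :
    Fintype.card F ^ k * #𝒮 ≤ #{ab ∈ leftVecs F k ×ˢ rightVecs k P | boolIP ab.1 ab.2 = β} := by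
  rw [← card_polysDegreeLT, ← card_product]
  refine card_le_card_of_injOn
    (fun lS => (graphVec lS.1, graphVec (lS.1 - ∏ s ∈ lS.2, (X - C s)))) ?_ ?_
  · rintro ⟨l, S⟩ hlS
    obtain ⟨hl, hS⟩ := mem_product.mp hlS
    refine mem_filter.mpr ⟨mem_product.mpr ⟨mem_image_of_mem _ hl, mem_image.mpr
      ⟨l - ((∏ s ∈ S, (X - C s)) - P), ?_, by rw [sub_sub, sub_add_cancel]⟩⟩, ?_⟩
    · exact mem_polysDegreeLT.mpr (sub_mem (mem_polysDegreeLT.mp hl) (h𝒮 S hS).2)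
    · rw [boolIP_graphVec]
      simp only [eval_sub, eq_comm (a := eval _ l), sub_eq_self]
      rw [filter_eval_prod_X_sub_C_eq_zero, (h𝒮 S hS).1]
  · rintro ⟨l, S⟩ hlS ⟨l', S'⟩ hlS' h
    obtain ⟨hl, hS⟩ := mem_product.mp hlS
    obtain ⟨hl', hS'⟩ := mem_product.mp hlS'
    obtain ⟨h1, h2⟩ := Prod.ext_iff.mp h
    have hl : l = l' := eq_of_graphVec_eq ((degree_sub_lt_of_mem_polysDegreeLT hl hl').trans_le
      (by exact_mod_cast hk)) h1
    subst hl
    have hprod : ∏ s ∈ S, (X - C s) = ∏ s ∈ S', (X - C s) := by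
      refine sub_right_injective (eq_of_graphVec_eq ?_ h2)
      rw [sub_sub_sub_cancel_left, ← sub_sub_sub_cancel_right _ _ P]
      exact mem_degreeLT.mp (sub_mem (h𝒮 S' hS').2 (h𝒮 S hS).2) |>.trans_le
        (by exact_mod_cast hk)
    have hS : S = S' := val_inj.mp (by rw [← roots_prod_X_sub_C S, hprod, roots_prod_X_sub_C])
    rw [hS]

/-- Pigeonhole over the coefficients of degree `≥ k` of the split polynomials of degree `β`. -/
theorem exists_many_prod_X_sub_C_sub_mem_degreeLT {k β N : ℕ} (hk : k ≤ β) (hN : 0 < N)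
    (hcount : Fintype.card F ^ (β - k + 1) * N ≤ (Fintype.card F).choose β) :
    ∃ P : F[X], P.degree = β ∧ ∃ 𝒮 : Finset (Finset F), N ≤ #𝒮 ∧
      ∀ S ∈ 𝒮, #S = β ∧ (∏ s ∈ S, (X - C s)) - P ∈ degreeLT F k := by
  classical
  have hmaps : ∀ S ∈ powersetCard β (univ : Finset F),
      (∏ s ∈ S, (X - C s)) /ₘ X ^ k ∈ polysDegreeLT F (β - k + 1) := by
    intro S hS
    refine mem_polysDegreeLT.mpr (mem_degreeLT.mpr (degree_le_natDegree.trans_lt ?_))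
    rw [natDegree_divByMonic _ (monic_X_pow k), natDegree_X_pow,
      natDegree_finsetProd_X_sub_C_eq_card S (fun s => s), (mem_powersetCard.mp hS).2]
    exact_mod_cast Nat.lt_succ_self _
  obtain ⟨Q, -, hQ⟩ := exists_le_card_fiber_of_mul_le_card_of_maps_to hmaps
    ⟨0, mem_polysDegreeLT.mpr (zero_mem _)⟩
    (by rwa [card_polysDegreeLT, card_powersetCard, card_univ])
  have hmem : ∀ S ∈ {S ∈ powersetCard β (univ : Finset F) | (∏ s ∈ S, (X - C s)) /ₘ X ^ k = Q},
      #S = β ∧ (∏ s ∈ S, (X - C s)) - X ^ k * Q ∈ degreeLT F k := by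
    intro S hS
    obtain ⟨hSβ, hSQ⟩ := mem_filter.mp hS
    refine ⟨(mem_powersetCard.mp hSβ).2, mem_degreeLT.mpr ?_⟩
    rw [← hSQ, ← eq_sub_of_add_eq (modByMonic_add_div _ (X ^ k)), ← degree_X_pow (R := F) k]
    exact degree_modByMonic_lt _ (monic_X_pow k)
  obtain ⟨S₀, hS₀⟩ := card_pos.mp (hN.trans_le hQ)
  refine ⟨X ^ k * Q, ?_, _, hQ, hmem⟩
  obtain ⟨hcard, hlow⟩ := hmem S₀ hS₀
  have hdeg : (∏ s ∈ S₀, (X - C s)).degree = (β : WithBot ℕ) := by rw [degree_prod_X_sub_C, hcard]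
  have hlow' : ((∏ s ∈ S₀, (X - C s)) - X ^ k * Q).degree < (∏ s ∈ S₀, (X - C s)).degree := by
    rw [hdeg]
    exact (mem_degreeLT.mp hlow).trans_le (by exact_mod_cast hk)
  rw [← sub_sub_cancel (∏ s ∈ S₀, (X - C s)) (X ^ k * Q), degree_sub_eq_left_of_degree_lt hlow',
    hdeg]

theorem exists_isGapIPRealization {k β N : ℕ} (hβ : 3 * k ≤ β) (hN : 0 < N)
    (hcount : Fintype.card F ^ (β - k + 1) * N ≤ (Fintype.card F).choose β) :
    ∃ (A B : Finset (Fin (Fintype.card (F × F)) → Bool)) (E : Finset _),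
      #A = Fintype.card F ^ k ∧ #B = Fintype.card F ^ k ∧ Fintype.card F ^ k * N ≤ #E ∧
      IsGapIPRealization β A B E := by
  obtain ⟨P, hP, 𝒮, hN𝒮, h𝒮⟩ := exists_many_prod_X_sub_C_sub_mem_degreeLT (by omega) hN hcount
  have hkF : k ≤ Fintype.card F := by
    have : 0 < (Fintype.card F).choose β :=
      (Nat.mul_pos (Nat.pow_pos Fintype.card_pos) hN).trans_le hcount
    have := Nat.choose_eq_zero_iff.not.mp this.ne'
    omega
  have lt_div_three {x : ℕ} (hx : x < k) : (x : ℝ) < β / 3 := by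
    rw [lt_div_iff₀ three_pos]
    exact_mod_cast (by omega : x * 3 < β)
  refine ⟨leftVecs F k, rightVecs k P, {ab ∈ leftVecs F k ×ˢ rightVecs k P | boolIP ab.1 ab.2 = β},
    card_leftVecs hkF, card_rightVecs hkF P,
    (Nat.mul_le_mul_left _ hN𝒮).trans (card_pow_mul_le_card_edges hkF P 𝒮 h𝒮),
    filter_subset _ _, fun ab hab => (mem_filter.mp hab).2, fun a ha b hb hab => ?_,
    fun a ha a' ha' hne => lt_div_three (boolIP_lt_of_mem_leftVecs ha ha' hne),
    fun b hb b' hb' hne => lt_div_three (boolIP_lt_of_mem_rightVecs hb hb' hne)⟩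
  exact (boolIP_le_of_mem_leftVecs_of_mem_rightVecs hP (by omega) ha hb).lt_of_ne
    fun h => hab (mem_filter.mpr ⟨mem_product.mpr ⟨ha, hb⟩, h⟩)

end FiniteField

theorem pow_le_choose_mul_pow {n r : ℕ} (h : 2 * r ≤ n) : n ^ r ≤ n.choose r * (2 * r) ^ r :=
  calc n ^ r ≤ (2 * (n + 1 - r)) ^ r := Nat.pow_le_pow_left (by omega) r
    _ = 2 ^ r * (n + 1 - r) ^ r := mul_pow ..
    _ ≤ 2 ^ r * (r ! * n.choose r) := by
      rw [← Nat.descFactorial_eq_factorial_mul_choose]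
      gcongr
      exact Nat.pow_sub_le_descFactorial n r
    _ ≤ 2 ^ r * (r ^ r * n.choose r) := by gcongr; exact Nat.factorial_le_pow r
    _ = n.choose r * (2 * r) ^ r := by ring

theorem pow_mul_pow_le_choose {a j q : ℕ} (hj : 2 ≤ j) (hk : 6 ≤ a * j)
    (hq : (a * j) ^ (12 * a) < q) :
    q ^ (3 * (a * j) - a * j + 1) * q ^ (a * j - j) ≤ q.choose (3 * (a * j)) := by
  obtain ⟨i, rfl⟩ : ∃ i, j = i + 2 := ⟨j - 2, by omega⟩
  have ha : 1 ≤ a := Nat.pos_of_ne_zero fun h => by simp [h] at hk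
  set k := a * (i + 2) with hk_def
  have hjk : i + 2 ≤ k := Nat.le_mul_of_pos_left _ ha
  have hk2 : 6 * k ≤ k ^ 2 := by nlinarith
  have hsmall : (2 * (3 * k)) ^ (3 * k) ≤ q ^ (i + 1) :=
    calc (2 * (3 * k)) ^ (3 * k) ≤ (k ^ 2) ^ (3 * k) := Nat.pow_le_pow_left (by omega) _
      _ ≤ (k ^ (12 * a)) ^ (i + 1) := by
        rw [← pow_mul, ← pow_mul]
        exact Nat.pow_le_pow_right (by omega) (by rw [hk_def]; nlinarith)
      _ ≤ q ^ (i + 1) := Nat.pow_le_pow_left hq.le _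
  have h6k : 2 * (3 * k) ≤ q :=
    calc 2 * (3 * k) ≤ k ^ 2 := by omega
      _ ≤ k ^ (12 * a) := Nat.pow_le_pow_right (by omega) (by omega)
      _ ≤ q := hq.le
  refine Nat.le_of_mul_le_mul_right ?_ (Nat.pow_pos (a := q) (n := i + 1) (by omega))
  calc q ^ (3 * k - k + 1) * q ^ (k - (i + 2)) * q ^ (i + 1) = q ^ (3 * k) := by
        rw [← pow_add, ← pow_add]
        congr 1
        omega
    _ ≤ q.choose (3 * k) * (2 * (3 * k)) ^ (3 * k) := pow_le_choose_mul_pow h6k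
    _ ≤ q.choose (3 * k) * q ^ (i + 1) := Nat.mul_le_mul_left _ hsmall

theorem cast_mul_self_le_log_pow {q k t : ℕ} (hk : 2 ≤ k) (hq : 3 ≤ q) (hqk : q ≤ 2 * k ^ t) :
    ((q * q : ℕ) : ℝ) ≤ Real.log ((q ^ k : ℕ) : ℝ) ^ ((2 * t + 2 : ℕ) : ℝ) := by
  have hlogq : 1 ≤ Real.log q := by
    rw [Real.le_log_iff_exp_le (by positivity)]
    exact Real.exp_one_lt_three.le.trans (by exact_mod_cast hq)
  have hlog : (k : ℝ) ≤ Real.log ((q ^ k : ℕ) : ℝ) := by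
    rw [Nat.cast_pow, Real.log_pow]
    nlinarith
  have hnat : q * q ≤ k ^ (2 * t + 2) :=
    calc q * q ≤ (2 * k ^ t) * (2 * k ^ t) := Nat.mul_le_mul hqk hqk
      _ = 4 * k ^ (2 * t) := by ring
      _ ≤ k ^ 2 * k ^ (2 * t) := by gcongr; nlinarith
      _ = k ^ (2 * t + 2) := by ring
  rw [Real.rpow_natCast]
  calc ((q * q : ℕ) : ℝ) ≤ (k : ℝ) ^ (2 * t + 2) := by exact_mod_cast hnat
    _ ≤ _ := pow_le_pow_left₀ (by positivity) hlog _

theorem cast_pow_rpow_two_sub_le {q k m : ℕ} {δ : ℝ} (hq : 1 ≤ q) (hm : (m : ℝ) ≤ k * δ)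
    (hmk : m ≤ 2 * k) : ((q ^ k : ℕ) : ℝ) ^ (2 - δ) ≤ ((q ^ (2 * k - m) : ℕ) : ℝ) := by
  rw [Nat.cast_pow, Nat.cast_pow, ← Real.rpow_natCast (q : ℝ) k, ← Real.rpow_mul (by positivity),
    ← Real.rpow_natCast]
  refine Real.rpow_le_rpow_of_exponent_le (by exact_mod_cast hq) ?_
  push_cast [hmk]
  linarith

theorem pow_lt_pow_of_doubling {k t q q' : ℕ} (hk : 0 < k) (ht : 0 < t) (hq : q ≤ 2 * k ^ t)
    (hq' : (2 * k) ^ t < q') : q ^ k < q' ^ (2 * k) := by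
  have hqq : q < q' :=
    calc q ≤ 2 ^ t * k ^ t := hq.trans (Nat.mul_le_mul_right _ (Nat.le_self_pow ht.ne' 2))
      _ = (2 * k) ^ t := (mul_pow ..).symm
      _ < q' := hq'
  calc q ^ k < q' ^ k := Nat.pow_lt_pow_left hqq hk.ne'
    _ ≤ q' ^ (2 * k) := Nat.pow_le_pow_right (by omega) (by omega)

theorem log_pow_le_of_doubling {k t q q' : ℕ} (hk : 4 ≤ k) (ht : 0 < t) (hq : k ^ t < q)
    (hq'0 : 0 < q') (hq' : q' ≤ 2 * (2 * k) ^ t) :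
    Real.log ((q' ^ (2 * k) : ℕ) : ℝ) ≤ 4 * Real.log ((q ^ k : ℕ) : ℝ) := by
  have hqq : q' ≤ q ^ 2 :=
    calc q' ≤ 2 * 2 ^ t * k ^ t := by rw [mul_assoc, ← mul_pow]; exact hq'
      _ ≤ 4 ^ t * k ^ t := by
        gcongr
        rw [show 4 = 2 * 2 by rfl, mul_pow]
        exact Nat.mul_le_mul_right _ (Nat.le_self_pow ht.ne' 2)
      _ ≤ k ^ t * k ^ t := by gcongr
      _ ≤ q ^ 2 := by rw [sq]; exact Nat.mul_le_mul hq.le hq.le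
  have hlog : Real.log q' ≤ 2 * Real.log q := by
    calc Real.log q' ≤ Real.log ((q : ℝ) ^ 2) :=
          Real.log_le_log (by exact_mod_cast hq'0) (by exact_mod_cast hqq)
      _ = 2 * Real.log q := by rw [Real.log_pow]; norm_num
  push_cast
  rw [Real.log_pow, Real.log_pow]
  push_cast
  nlinarith

theorem exists_isGapIPRealization_of_prime {δ : ℝ} {a j q : ℕ} (hq : q.Prime) (hδ : 1 ≤ a * δ)
    (hj : 2 ≤ j) (hk : 6 ≤ a * j) (hqk : (a * j) ^ (12 * a) < q)
    (hqk' : q ≤ 2 * (a * j) ^ (12 * a)) :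
    ∃ (d : ℕ) (A B : Finset (Fin d → Bool)) (E : Finset ((Fin d → Bool) × (Fin d → Bool))),
      (d : ℝ) ≤ Real.log ((q ^ (a * j) : ℕ) : ℝ) ^ ((2 * (12 * a) + 2 : ℕ) : ℝ) ∧
      #A = q ^ (a * j) ∧ #B = q ^ (a * j) ∧ ((q ^ (a * j) : ℕ) : ℝ) ^ (2 - δ) ≤ #E ∧
      IsGapIPRealization (3 * (a * j)) A B E := by
  have := Fact.mk hq
  have ha : a ≠ 0 := fun h => by simp [h] at hk
  have hjk : j ≤ a * j := Nat.le_mul_of_pos_left _ (Nat.pos_of_ne_zero ha)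
  have hq6 : 6 < q := hk.trans_lt ((Nat.le_self_pow (by omega) _).trans_lt hqk)
  obtain ⟨A, B, E, hA, hB, hE, hgap⟩ := exists_isGapIPRealization (F := ZMod q) (k := a * j)
    (N := q ^ (a * j - j)) le_rfl (Nat.pow_pos hq.pos)
    (by simpa [ZMod.card] using pow_mul_pow_le_choose hj hk hqk)
  rw [ZMod.card] at hA hB hE
  refine ⟨_, A, B, E, ?_, hA, hB, ?_, hgap⟩
  · rw [Fintype.card_prod, ZMod.card]
    exact cast_mul_self_le_log_pow (by omega) (by omega) hqk'
  · refine (cast_pow_rpow_two_sub_le hq.one_le (m := j) ?_ (by omega)).trans ?_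
    · push_cast
      nlinarith
    · rw [show 2 * (a * j) - j = a * j + (a * j - j) by omega, pow_add]
      exact_mod_cast hE

end GapIP

open GapIP

theorem stmt_9_general (δ : ℝ) (hδ0 : 0 < δ) :
    ∃ (C c s : ℝ) (n : ℕ → ℕ),
      1 ≤ C ∧ 0 < c ∧ 0 < s ∧
      StrictMono n ∧ (∀ i, 2 ≤ n i) ∧
      (∀ i, Real.log (n (i + 1)) ≤ C * Real.log (n i)) ∧
      (∀ i, ∃ (d : ℕ) (A B : Finset (Fin d → Bool))
          (E : Finset ((Fin d → Bool) × (Fin d → Bool))) (β : ℕ),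
        (d : ℝ) ≤ Real.log (n i) ^ s ∧
        A.card = n i ∧ B.card = n i ∧
        E ⊆ A ×ˢ B ∧
        c * (n i : ℝ) ^ (2 - δ) ≤ (E.card : ℝ) ∧
        0 < β ∧
        (∀ ab ∈ E, boolIP ab.1 ab.2 = β) ∧
        (∀ a ∈ A, ∀ b ∈ B, (a, b) ∉ E → boolIP a b < β) ∧
        (∀ a ∈ A, ∀ a' ∈ A, a ≠ a' → (boolIP a a' : ℝ) < β / 3) ∧
        (∀ b ∈ B, ∀ b' ∈ B, b ≠ b' → (boolIP b b' : ℝ) < β / 3)) := by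
  obtain ⟨a, ha⟩ : ∃ a : ℕ, 1 ≤ a * δ :=
    ⟨⌈δ⁻¹⌉₊, by simpa [hδ0.ne'] using mul_le_mul_of_nonneg_right (Nat.le_ceil δ⁻¹) hδ0.le⟩
  have ha0 : 0 < a := Nat.pos_of_ne_zero fun h => by simp [h] at ha; linarith
  set k : ℕ → ℕ := fun i => a * (6 * 2 ^ i) with hk
  have hk6 (i) : 6 ≤ k i :=
    le_mul_of_one_le_of_le ha0 (by have := Nat.one_le_two_pow (n := i); omega)
  have hk_succ (i) : k (i + 1) = 2 * k i := by simp only [hk, pow_succ]; ring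
  choose q hq using fun i => Nat.exists_prime_lt_and_le_two_mul (k i ^ (12 * a)) (by positivity)
  refine ⟨4, 1, ((2 * (12 * a) + 2 : ℕ) : ℝ), fun i => q i ^ k i, by norm_num, one_pos,
    by positivity, strictMono_nat_of_lt_succ fun i => ?_, fun i => ?_, fun i => ?_, fun i => ?_⟩
  · have hq' := (hq (i + 1)).2.1
    rw [hk_succ] at hq' ⊢
    exact pow_lt_pow_of_doubling (by have := hk6 i; omega) (by omega) (hq i).2.2 hq'
  · exact (hq i).1.two_le.trans (Nat.le_self_pow (by have := hk6 i; omega) _)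
  · have hq' := (hq (i + 1)).2.2
    dsimp only
    rw [hk_succ] at hq' ⊢
    exact log_pow_le_of_doubling (by have := hk6 i; omega) (by omega) (hq i).2.1
      (hq (i + 1)).1.pos hq'
  · obtain ⟨d, A, B, E, hd, hA, hB, hE, hgap⟩ := exists_isGapIPRealization_of_prime (hq i).1 ha
      (by have := Nat.one_le_two_pow (n := i); omega) (hk6 i) (hq i).2.1 (hq i).2.2
    exact ⟨d, A, B, E, 3 * k i, hd, hA, hB, hgap.subset, by rwa [one_mul],
      by have := hk6 i; omega, hgap.boolIP_eq_of_mem, hgap.boolIP_lt_of_notMem, hgap.boolIP_lt_left,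
      hgap.boolIP_lt_right⟩

/-- for every `0 < δ < 1` there is a log-dense sequence `(n_i)` of sizes
for which there are dense bipartite graphs on Boolean vectors in dimension
`(log n_i)^s` with at least `c · n_i^{2-δ}` edges, gap-IP-realized with gap 3:
edges have inner product exactly `β`, cross non-edges have inner product `< β`,
and distinct same-side pairs have inner product `< β/3`. -/
theorem stmt_9 (δ : ℝ) (hδ0 : 0 < δ) (hδ1 : δ < 1) :
    ∃ (C c s : ℝ) (n : ℕ → ℕ),
      1 ≤ C ∧ 0 < c ∧ 0 < s ∧
      StrictMono n ∧ (∀ i, 2 ≤ n i) ∧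
      (∀ i, Real.log (n (i + 1)) ≤ C * Real.log (n i)) ∧
      (∀ i, ∃ (d : ℕ) (A B : Finset (Fin d → Bool))
          (E : Finset ((Fin d → Bool) × (Fin d → Bool))) (β : ℕ),
        (d : ℝ) ≤ Real.log (n i) ^ s ∧
        A.card = n i ∧ B.card = n i ∧
        E ⊆ A ×ˢ B ∧
        c * (n i : ℝ) ^ (2 - δ) ≤ (E.card : ℝ) ∧
        0 < β ∧
        (∀ ab ∈ E, boolIP ab.1 ab.2 = β) ∧
        (∀ a ∈ A, ∀ b ∈ B, (a, b) ∉ E → boolIP a b < β) ∧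
        (∀ a ∈ A, ∀ a' ∈ A, a ≠ a' → (boolIP a a' : ℝ) < β / 3) ∧
        (∀ b ∈ B, ∀ b' ∈ B, b ≠ b' → (boolIP b b' : ℝ) < β / 3)) :=
  stmt_9_general δ hδ0
end

section
/- For every real δ with 0 < δ < 1 and every prime power q ≥ 2 such that K := ⌊q^{0.3δ}/3⌋ ≥ 1, setting n = q^K and d = q², there exist finite sets A, B of vectors in (Fin d → Bool) with |A| = |B| = n and a set E ⊆ A × B with |E| ≥ n^{2−δ}/2 such that: every pair (a, b) ∈ E has inner product ⟨a, b⟩ = 3K; every pair (a, b) ∈ (A × B) \ E has ⟨a, b⟩ < 3K; and any two distinct vectors both in A or both in B have inner product strictly less than K. -/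
open Polynomial Finset
set_option linter.unusedSectionVars false

namespace Stmt10Aux

variable {F : Type*} [Field F] [Fintype F] [DecidableEq F]

def graphF (f : F → F) : Finset (F × F) := univ.image fun x => (x, f x)

lemma mem_graphF {f : F → F} {p : F × F} : p ∈ graphF f ↔ p.2 = f p.1 := by
  constructor
  · intro h
    obtain ⟨x, -, hx⟩ := Finset.mem_image.1 h
    rw [← hx]
  · intro h
    exact Finset.mem_image.2 ⟨p.1, Finset.mem_univ _, by rw [← h]⟩

lemma graphF_inj {f g : F → F} (h : graphF f = graphF g) : f = g := by
  funext x
  have : (x, f x) ∈ graphF g := h ▸ mem_graphF.2 rfl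
  exact mem_graphF.1 this

/-- vectors from finsets of pairs -/
def vv {d : ℕ} (e : Fin d ≃ (F × F)) (s : Finset (F × F)) : Fin d → Bool :=
  fun i => decide (e i ∈ s)

lemma vv_inj {d : ℕ} (e : Fin d ≃ (F × F)) : Function.Injective (vv e) := by
  intro s t h
  ext a
  have := congrFun h (e.symm a)
  simpa [vv] using this

lemma boolIP_vv {d : ℕ} (e : Fin d ≃ (F × F)) (s t : Finset (F × F)) :
    boolIP (vv e s) (vv e t) = (s ∩ t).card := by
  unfold boolIP
  have h : (univ.filter fun i => vv e s i = true ∧ vv e t i = true)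
      = univ.filter fun i => e i ∈ s ∩ t := by
    ext i
    simp [vv, Finset.mem_inter]
  rw [h]
  apply Finset.card_bij (fun i _ => e i)
  · intro i hi
    exact (Finset.mem_filter.1 hi).2
  · intro i _ j _ hij
    exact e.injective hij
  · intro b hb
    exact ⟨e.symm b, Finset.mem_filter.2 ⟨Finset.mem_univ _, by simpa using hb⟩,
      e.apply_symm_apply b⟩

lemma card_inter_graphF (f g : F → F) :
    (graphF f ∩ graphF g).card = (univ.filter fun x => f x = g x).card := by
  apply Finset.card_bij (fun p _ => p.1)
  · intro p hp
    rw [Finset.mem_inter] at hp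
    have h1 := mem_graphF.1 hp.1
    have h2 := mem_graphF.1 hp.2
    exact Finset.mem_filter.2 ⟨Finset.mem_univ _, by rw [← h1, ← h2]⟩
  · intro p hp q hq hpq
    rw [Finset.mem_inter] at hp hq
    have h1 := mem_graphF.1 hp.1
    have h2 := mem_graphF.1 hq.1
    exact Prod.ext hpq (by rw [h1, h2, hpq])
  · intro x hx
    exact ⟨(x, f x), Finset.mem_inter.2 ⟨mem_graphF.2 rfl,
      mem_graphF.2 (Finset.mem_filter.1 hx).2⟩, rfl⟩

lemma card_roots_filter_le (p : F[X]) (hp : p ≠ 0) :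
    (univ.filter fun x => p.eval x = 0).card ≤ p.natDegree := by
  calc (univ.filter fun x => p.eval x = 0).card
      ≤ p.roots.toFinset.card := by
        apply Finset.card_le_card
        intro x hx
        rw [Multiset.mem_toFinset, mem_roots hp]
        exact (Finset.mem_filter.1 hx).2
    _ ≤ Multiset.card p.roots := Multiset.toFinset_card_le _
    _ ≤ p.natDegree := p.card_roots'

lemma eval_injective {p r : F[X]} (hd : (p - r).degree < (Fintype.card F : ℕ))
    (h : ∀ x, p.eval x = r.eval x) : p = r := by
  by_contra hne
  have hsub : p - r ≠ 0 := sub_ne_zero.2 hne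
  have hall : (univ.filter fun x => (p - r).eval x = 0) = univ := by
    ext x
    simp [sub_eq_zero, h x]
  have hcard : Fintype.card F ≤ (p - r).natDegree := by
    have := card_roots_filter_le (p - r) hsub
    rwa [hall, Finset.card_univ] at this
  rw [degree_eq_natDegree hsub, Nat.cast_lt] at hd
  omega

variable (K : ℕ)

/-- the polynomial with coefficient vector `c` -/
noncomputable def pc (c : Fin K → F) : F[X] := ((degreeLTEquiv F K).symm c : F[X])

lemma pc_mem (c : Fin K → F) : pc K c ∈ degreeLT F K := ((degreeLTEquiv F K).symm c).2

lemma pc_degree (c : Fin K → F) : (pc K c).degree < (K : ℕ) :=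
  mem_degreeLT.1 (pc_mem K c)

lemma pc_inj : Function.Injective (pc (F := F) K) := by
  intro c c' h
  have := (degreeLTEquiv F K).symm.injective (Subtype.ext h)
  exact this

lemma pc_spec {r : F[X]} (h : r ∈ degreeLT F K) :
    pc K (degreeLTEquiv F K ⟨r, h⟩) = r := by
  simp [pc]

lemma pc_sub (c c' : Fin K → F) : pc K (c - c') = pc K c - pc K c' := by
  unfold pc
  rw [map_sub]
  rfl

/-- product of linear factors over a finset -/
noncomputable def PT (T : Finset F) : F[X] := ∏ t ∈ T, (X - C t)

lemma PT_monic (T : Finset F) : (PT T).Monic :=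
  monic_prod_of_monic _ _ fun t _ => monic_X_sub_C t

lemma PT_natDegree (T : Finset F) : (PT T).natDegree = T.card := by
  unfold PT
  rw [natDegree_prod _ _ fun t _ => X_sub_C_ne_zero t]
  simp

lemma PT_degree (T : Finset F) : (PT T).degree = (T.card : ℕ) := by
  rw [degree_eq_natDegree (PT_monic T).ne_zero, PT_natDegree]

lemma PT_filter (T : Finset F) : (univ.filter fun x => (PT T).eval x = 0) = T := by
  ext y
  simp only [Finset.mem_filter, Finset.mem_univ, true_and, PT, eval_prod]
  rw [Finset.prod_eq_zero_iff]
  constructor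
  · rintro ⟨t, ht, h⟩
    simp only [eval_sub, eval_X, eval_C, sub_eq_zero] at h
    rwa [h]
  · intro hy
    exact ⟨y, hy, by simp⟩

/-- `(n/k)^k ≤ C(n,k)` in the form `n^k ≤ k^k * C(n,k)`, for `2k ≤ n`. -/
lemma pow_le_mul_choose : ∀ (k n : ℕ), 2 * k ≤ n →
    (n : ℝ) ^ k ≤ (k : ℝ) ^ k * (n.choose k : ℝ) := by
  intro k
  induction k with
  | zero => intro n _; simp
  | succ k ih =>
    intro n hn
    have IH := ih n (by omega)
    have hkn : k ≤ n := by omega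
    have hrec : (n.choose (k+1) : ℝ) * (k+1) = (n.choose k : ℝ) * ((n : ℝ) - k) := by
      have h := Nat.choose_succ_right_eq n k
      calc (n.choose (k+1) : ℝ) * (k+1) = ((n.choose (k+1) * (k+1) : ℕ) : ℝ) := by push_cast; ring
        _ = ((n.choose k * (n - k) : ℕ) : ℝ) := by rw [h]
        _ = (n.choose k : ℝ) * ((n : ℝ) - k) := by push_cast [Nat.cast_sub hkn]; ring
    have hC0 : (0:ℝ) ≤ (n.choose k : ℝ) := Nat.cast_nonneg _
    rcases Nat.eq_zero_or_pos k with hk0 | hkpos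
    · subst hk0
      rw [Nat.choose_one_right]
      push_cast
      norm_num
    · have hkR : (0:ℝ) < k := by exact_mod_cast hkpos
      have hbern : (1:ℝ) + (k:ℝ) * (1 / k) ≤ (1 + 1 / (k:ℝ)) ^ k := by
        apply one_add_mul_le_pow
        have : (0:ℝ) ≤ 1 / (k:ℝ) := by positivity
        linarith
      have hmul : (1 + 1 / (k:ℝ)) ^ k * (k:ℝ) ^ k = ((k:ℝ) + 1) ^ k := by
        rw [← mul_pow]
        congr 1
        field_simp
      have hone : (k:ℝ) * (1 / k) = 1 := by field_simp
      have hkk0 : (0:ℝ) ≤ (k:ℝ) ^ k := by positivity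
      have key : 2 * (k:ℝ) ^ k ≤ ((k:ℝ) + 1) ^ k := by
        rw [← hmul]
        have h2 : (2:ℝ) ≤ (1 + 1 / (k:ℝ)) ^ k := by rw [hone] at hbern; linarith
        nlinarith
      have hnR : 2 * ((k:ℝ) + 1) ≤ (n : ℝ) := by exact_mod_cast hn
      have h1 : (n:ℝ) ^ (k+1) ≤ (k:ℝ) ^ k * (n.choose k : ℝ) * n := by
        rw [pow_succ]
        exact mul_le_mul_of_nonneg_right IH (Nat.cast_nonneg n)
      have h2 : ((k:ℝ) + 1) ^ (k+1) * (n.choose (k+1) : ℝ)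
          = ((k:ℝ) + 1) ^ k * ((n.choose k : ℝ) * ((n : ℝ) - k)) := by
        rw [pow_succ, ← hrec]
        ring
      have hnk0 : (0:ℝ) ≤ (n:ℝ) - k := by
        have : (k:ℝ) ≤ n := by exact_mod_cast hkn
        linarith
      have h3 : (k:ℝ) ^ k * (n.choose k : ℝ) * n
          ≤ ((k:ℝ) + 1) ^ k * ((n.choose k : ℝ) * ((n : ℝ) - k)) := by
        nlinarith [mul_le_mul_of_nonneg_right key (mul_nonneg hC0 hnk0),
          mul_nonneg (mul_nonneg hkk0 hC0) (show (0:ℝ) ≤ (n:ℝ) - 2 * k by linarith)]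
      push_cast
      calc (n:ℝ) ^ (k+1) ≤ (k:ℝ) ^ k * (n.choose k : ℝ) * n := h1
        _ ≤ ((k:ℝ) + 1) ^ k * ((n.choose k : ℝ) * ((n : ℝ) - k)) := h3
        _ = ((k:ℝ) + 1) ^ (k+1) * (n.choose (k+1) : ℝ) := h2.symm

theorem main (F : Type*) [Field F] [Fintype F] [DecidableEq F]
    (q K : ℕ) (δ : ℝ) (hF : Fintype.card F = q) (hK1 : 1 ≤ K) (h6K : 6 * K ≤ q)
    (hq1 : (1:ℝ) ≤ q)
    (hexp : ((3 * K : ℕ) : ℝ) ^ (3 * K) ≤ (q:ℝ) ^ (δ * (K:ℝ))) :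
    ∃ (A B : Finset (Fin (q ^ 2) → Bool))
      (E : Finset ((Fin (q ^ 2) → Bool) × (Fin (q ^ 2) → Bool))),
      A.card = q ^ K ∧ B.card = q ^ K ∧
      E ⊆ A ×ˢ B ∧
      ((q ^ K : ℝ) ^ (2 - δ)) / 2 ≤ (E.card : ℝ) ∧
      (∀ ab ∈ E, boolIP ab.1 ab.2 = 3 * K) ∧
      (∀ a ∈ A, ∀ b ∈ B, (a, b) ∉ E → boolIP a b < 3 * K) ∧
      (∀ a ∈ A, ∀ a' ∈ A, a ≠ a' → boolIP a a' < K) ∧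
      (∀ b ∈ B, ∀ b' ∈ B, b ≠ b' → boolIP b b' < K) := by
  classical
  have hcard : Fintype.card (F × F) = q ^ 2 := by rw [Fintype.card_prod, hF]; ring
  set e : Fin (q^2) ≃ F × F := (Fintype.equivFinOfCardEq hcard).symm with he
  have h3Kq : 3 * K < q := by omega
  have hKq : K ≤ q := by omega
  have hqcast : ((Fintype.card F : ℕ) : WithBot ℕ) = ((q:ℕ) : WithBot ℕ) := by rw [hF]
  -- Ω, signature, best fiber
  set Ω : Finset (Finset F) := Finset.powersetCard (3*K) univ with hΩdef
  have hΩcard : Ω.card = q.choose (3*K) := by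
    rw [hΩdef, Finset.card_powersetCard, Finset.card_univ, hF]
  have hΩne : Ω.Nonempty := by
    rw [hΩdef]
    exact Finset.powersetCard_nonempty.2 (by rw [Finset.card_univ, hF]; omega)
  set σ : Finset F → (Fin (2*K) → F) := fun T i => (PT T).coeff (K + i) with hσdef
  obtain ⟨w, hw_mem, hw_max⟩ := Finset.exists_max_image (Ω.image σ)
    (fun w => (Ω.filter fun T => σ T = w).card) (hΩne.image σ)
  set fib : Finset (Finset F) := Ω.filter fun T => σ T = w with hfibdef
  set M := fib.card with hMdef
  have hΩle : Ω.card ≤ q ^ (2*K) * M := by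
    calc Ω.card = ∑ w' ∈ Ω.image σ, (Ω.filter fun T => σ T = w').card :=
          Finset.card_eq_sum_card_fiberwise fun T hT => Finset.mem_image_of_mem σ hT
      _ ≤ (Ω.image σ).card * M := by
          have := Finset.sum_le_card_nsmul (Ω.image σ) _ M fun w' hw' => hw_max w' hw'
          simpa [smul_eq_mul] using this
      _ ≤ q ^ (2*K) * M := by
          apply Nat.mul_le_mul_right
          calc (Ω.image σ).card ≤ Fintype.card (Fin (2*K) → F) := Finset.card_le_univ _
            _ = q ^ (2*K) := by rw [Fintype.card_fun, hF, Fintype.card_fin]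
  obtain ⟨S, hSΩ, hSw⟩ := Finset.mem_image.1 hw_mem
  have hScard : S.card = 3*K := (Finset.mem_powersetCard.1 hSΩ).2
  set PS : F[X] := PT S with hPSdef
  have hPSdeg : PS.degree = ((3*K : ℕ) : WithBot ℕ) := by
    rw [hPSdef, PT_degree, hScard]
  -- the vertex maps
  set av : (Fin K → F) → (Fin (q^2) → Bool) :=
    fun c => vv e (graphF fun x => (pc K c).eval x) with havdef
  set bv : (Fin K → F) → (Fin (q^2) → Bool) :=
    fun c => vv e (graphF fun x => (PS - pc K c).eval x) with hbvdef
  -- injectivity of vertex maps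
  have hpc_sub_deg : ∀ c c' : Fin K → F,
      (pc K c - pc K c').degree < ((K:ℕ) : WithBot ℕ) := by
    intro c c'
    exact mem_degreeLT.1 (Submodule.sub_mem _ (pc_mem K c) (pc_mem K c'))
  have hKcardF : ((K:ℕ) : WithBot ℕ) ≤ ((Fintype.card F : ℕ) : WithBot ℕ) := by
    rw [hqcast]
    exact_mod_cast hKq
  have hav_inj : Function.Injective av := by
    intro c c' h
    rw [havdef] at h
    have hg := graphF_inj (vv_inj e h)
    have : pc K c = pc K c' :=
      eval_injective (lt_of_lt_of_le (hpc_sub_deg c c') hKcardF) (fun x => congrFun hg x)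
    exact pc_inj K this
  have hbv_inj : Function.Injective bv := by
    intro c c' h
    rw [hbvdef] at h
    have hg := graphF_inj (vv_inj e h)
    have heq : PS - pc K c = PS - pc K c' := by
      refine eval_injective ?_ (fun x => congrFun hg x)
      have : PS - pc K c - (PS - pc K c') = pc K c' - pc K c := by ring
      rw [this]
      exact lt_of_lt_of_le (hpc_sub_deg c' c) hKcardF
    have : pc K c = pc K c' := by
      linear_combination -heq
    exact pc_inj K this

  set A := Finset.image av univ with hAdef
  set B := Finset.image bv univ with hBdef
  set E := (A ×ˢ B).filter (fun ab => boolIP ab.1 ab.2 = 3*K) with hEdef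
  have hcardFun : Fintype.card (Fin K → F) = q ^ K := by
    rw [Fintype.card_fun, hF, Fintype.card_fin]
  have hAcard : A.card = q ^ K := by
    rw [hAdef, Finset.card_image_of_injective _ hav_inj, Finset.card_univ, hcardFun]
  have hBcard : B.card = q ^ K := by
    rw [hBdef, Finset.card_image_of_injective _ hbv_inj, Finset.card_univ, hcardFun]
  -- cross inner product formula
  have hcross : ∀ c c' : Fin K → F, boolIP (av c) (bv c')
      = (univ.filter fun x => (pc K c + pc K c' - PS).eval x = 0).card := by
    intro c c'
    rw [havdef, hbvdef]
    dsimp only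
    rw [boolIP_vv, card_inter_graphF]
    congr 1
    refine Finset.filter_congr fun x _ => ?_
    simp only [eval_sub, eval_add]
    constructor <;> intro h <;> linear_combination h
  have hDdeg : ∀ c c' : Fin K → F,
      (pc K c + pc K c' - PS).degree = ((3*K:ℕ) : WithBot ℕ) := by
    intro c c'
    have hsum : (pc K c + pc K c').degree < ((K:ℕ) : WithBot ℕ) :=
      mem_degreeLT.1 (Submodule.add_mem _ (pc_mem K c) (pc_mem K c'))
    have hlt : (pc K c + pc K c').degree < PS.degree := by
      rw [hPSdeg]
      refine lt_of_lt_of_le hsum ?_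
      exact_mod_cast (by omega : K ≤ 3*K)
    rw [degree_sub_eq_right_of_degree_lt hlt]
    exact hPSdeg
  have hDne : ∀ c c' : Fin K → F, (pc K c + pc K c' - PS) ≠ 0 := by
    intro c c' h
    have h2 := hDdeg c c'
    rw [h, degree_zero] at h2
    exact (WithBot.bot_ne_coe (a := 3*K)) (by exact_mod_cast h2)
  have hcross_le : ∀ c c' : Fin K → F, boolIP (av c) (bv c') ≤ 3*K := by
    intro c c'
    rw [hcross]
    have h1 := card_roots_filter_le _ (hDne c c')
    have h2 : (pc K c + pc K c' - PS).natDegree = 3*K :=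
      natDegree_eq_of_degree_eq_some (hDdeg c c')
    omega
  -- fiber polynomials
  have hfibmem : ∀ T ∈ fib, PS - PT T ∈ degreeLT F K := by
    intro T hT
    obtain ⟨hTΩ, hTw⟩ := Finset.mem_filter.1 hT
    have hTcard : T.card = 3*K := (Finset.mem_powersetCard.1 hTΩ).2
    rw [mem_degreeLT]
    refine (degree_lt_iff_coeff_zero _ _).2 fun m hm => ?_
    rw [coeff_sub]
    rcases lt_trichotomy m (3*K) with h | h | h
    · have hi : m - K < 2*K := by omega
      have hcoeff := congrFun (hSw.trans hTw.symm) ⟨m - K, hi⟩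
      simp only [hσdef] at hcoeff
      rw [show K + (m - K) = m by omega] at hcoeff
      rw [hPSdef, hcoeff, sub_self]
    · have h1 : PS.coeff m = 1 := by
        rw [hPSdef, ← show (PT S).natDegree = m by rw [PT_natDegree, hScard, h]]
        exact (PT_monic S).coeff_natDegree
      have h2 : (PT T).coeff m = 1 := by
        rw [← show (PT T).natDegree = m by rw [PT_natDegree, hTcard, h]]
        exact (PT_monic T).coeff_natDegree
      rw [h1, h2, sub_self]
    · have h1 : PS.coeff m = 0 := by
        refine coeff_eq_zero_of_natDegree_lt ?_
        rw [hPSdef, PT_natDegree, hScard]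
        omega
      have h2 : (PT T).coeff m = 0 := by
        refine coeff_eq_zero_of_natDegree_lt ?_
        rw [PT_natDegree, hTcard]
        omega
      rw [h1, h2, sub_self]
  set u : Finset F → (Fin K → F) := fun T =>
    if h : PS - PT T ∈ degreeLT F K then degreeLTEquiv F K ⟨PS - PT T, h⟩ else 0 with hudef
  have hu : ∀ T ∈ fib, pc K (u T) = PS - PT T := by
    intro T hT
    rw [hudef]
    dsimp only
    rw [dif_pos (hfibmem T hT)]
    exact pc_spec K _
  have hedge : ∀ (c : Fin K → F), ∀ T ∈ fib, boolIP (av c) (bv (u T - c)) = 3*K := by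
    intro c T hT
    rw [hcross]
    have hpoly : pc K c + pc K (u T - c) - PS = -(PT T) := by
      rw [pc_sub, hu T hT]
      ring
    rw [hpoly]
    have hsetT : (univ.filter fun x => (-(PT T)).eval x = 0) = T := by
      simp only [eval_neg, neg_eq_zero]
      exact PT_filter T
    rw [hsetT]
    exact (Finset.mem_powersetCard.1 (Finset.mem_filter.1 hT).1).2
  -- counting injection
  set Φ : (Fin K → F) × Finset F → (Fin (q^2) → Bool) × (Fin (q^2) → Bool) :=
    fun z => (av z.1, vv e (graphF fun x => (PT z.2 + pc K z.1).eval x)) with hΦdef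
  have hΦbv : ∀ (c : Fin K → F), ∀ T ∈ fib, Φ (c, T) = (av c, bv (u T - c)) := by
    intro c T hT
    rw [hΦdef, hbvdef]
    dsimp only
    have hpoly : PT T + pc K c = PS - pc K (u T - c) := by
      rw [pc_sub, hu T hT]
      ring
    rw [hpoly]
  have hΦE : ∀ z ∈ (univ : Finset (Fin K → F)) ×ˢ fib, Φ z ∈ E := by
    rintro ⟨c, T⟩ hz
    have hT : T ∈ fib := (Finset.mem_product.1 hz).2
    rw [hΦbv c T hT, hEdef]
    refine Finset.mem_filter.2 ⟨Finset.mem_product.2 ⟨?_, ?_⟩, hedge c T hT⟩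
    · rw [hAdef]
      exact Finset.mem_image_of_mem av (Finset.mem_univ c)
    · rw [hBdef]
      exact Finset.mem_image_of_mem bv (Finset.mem_univ (u T - c))
  have hΦinj : Set.InjOn Φ ↑((univ : Finset (Fin K → F)) ×ˢ fib) := by
    rintro ⟨c, T⟩ hz ⟨c', T'⟩ hz' heq
    have hT : T ∈ fib := by
      have h := Finset.mem_coe.1 hz
      exact (Finset.mem_product.1 h).2
    have hT' : T' ∈ fib := by
      have h := Finset.mem_coe.1 hz'
      exact (Finset.mem_product.1 h).2
    have hTcard : T.card = 3*K :=
      (Finset.mem_powersetCard.1 (Finset.mem_filter.1 hT).1).2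
    have hT'card : T'.card = 3*K :=
      (Finset.mem_powersetCard.1 (Finset.mem_filter.1 hT').1).2
    rw [hΦdef] at heq
    simp only [Prod.mk.injEq] at heq
    obtain ⟨h1, h2⟩ := heq
    have hc : c = c' := hav_inj h1
    subst hc
    have hg := graphF_inj (vv_inj e h2)
    have hpeq : PT T + pc K c = PT T' + pc K c := by
      refine eval_injective ?_ (fun x => congrFun hg x)
      have hsub : PT T + pc K c - (PT T' + pc K c) = PT T - PT T' := by ring
      rw [hsub]
      calc (PT T - PT T').degree ≤ max (PT T).degree (PT T').degree := degree_sub_le _ _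
        _ ≤ ((3*K:ℕ) : WithBot ℕ) := by
            rw [PT_degree, PT_degree, hTcard, hT'card]
            simp
        _ < _ := by
            rw [hqcast]
            exact_mod_cast h3Kq
    have hPTeq : PT T = PT T' := by
      have := hpeq
      linear_combination this
    have hTT : T = T' := by
      rw [← PT_filter T, ← PT_filter T', hPTeq]
    rw [hTT]
  have hcount : q^K * M ≤ E.card := by
    have hle := Finset.card_le_card_of_injOn Φ hΦE hΦinj
    rwa [Finset.card_product, Finset.card_univ, hcardFun] at hle
  -- same-side bounds
  have hsameA : ∀ c c' : Fin K → F, c ≠ c' → boolIP (av c) (av c') < K := by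
    intro c c' hne
    rw [havdef]
    dsimp only
    rw [boolIP_vv, card_inter_graphF]
    have hne0 : pc K c - pc K c' ≠ 0 := sub_ne_zero.2 fun h => hne (pc_inj K h)
    have hfil : (univ.filter fun x => (pc K c).eval x = (pc K c').eval x)
        = univ.filter fun x => (pc K c - pc K c').eval x = 0 := by
      refine Finset.filter_congr fun x _ => ?_
      simp only [eval_sub]
      constructor <;> intro h <;> linear_combination h
    rw [hfil]
    have h1 := card_roots_filter_le _ hne0
    have h2 : (pc K c - pc K c').natDegree < K :=
      (natDegree_lt_iff_degree_lt hne0).2 (hpc_sub_deg c c')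
    omega
  have hsameB : ∀ c c' : Fin K → F, c ≠ c' → boolIP (bv c) (bv c') < K := by
    intro c c' hne
    rw [hbvdef]
    dsimp only
    rw [boolIP_vv, card_inter_graphF]
    have hne0 : pc K c' - pc K c ≠ 0 := sub_ne_zero.2 fun h => hne (pc_inj K h.symm)
    have hfil : (univ.filter fun x => (PS - pc K c).eval x = (PS - pc K c').eval x)
        = univ.filter fun x => (pc K c' - pc K c).eval x = 0 := by
      refine Finset.filter_congr fun x _ => ?_
      simp only [eval_sub]
      constructor <;> intro h <;> linear_combination h
    rw [hfil]
    have h1 := card_roots_filter_le _ hne0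
    have h2 : (pc K c' - pc K c).natDegree < K :=
      (natDegree_lt_iff_degree_lt hne0).2 (hpc_sub_deg c' c)
    omega
  -- the real-number bound
  have hx0 : (0:ℝ) < q := lt_of_lt_of_le one_pos hq1
  have hchoose := pow_le_mul_choose (3*K) q (by omega)
  have hA2 : (q.choose (3*K) : ℝ) ≤ (q:ℝ)^(2*K) * M := by
    rw [← hΩcard]
    exact_mod_cast hΩle
  have hA3 : (q:ℝ)^K * M ≤ (E.card : ℝ) := by exact_mod_cast hcount
  have hEc0 : (0:ℝ) ≤ (E.card : ℝ) := Nat.cast_nonneg _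
  have hX2pos : (0:ℝ) < (q:ℝ)^(2*K) := pow_pos hx0 _
  have hX1pos : (0:ℝ) < (q:ℝ)^K := pow_pos hx0 _
  have hDpos : (0:ℝ) < (q:ℝ) ^ (δ * (K:ℝ)) := Real.rpow_pos_of_pos hx0 _
  have hT0 : (0:ℝ) ≤ ((3*K:ℕ):ℝ)^(3*K) := by positivity
  have hstep : (q:ℝ)^(2*K) * (q:ℝ)^(2*K)
      ≤ (q:ℝ)^(2*K) * ((q:ℝ) ^ (δ * (K:ℝ)) * (E.card:ℝ)) := by
    calc (q:ℝ)^(2*K) * (q:ℝ)^(2*K) = (q:ℝ)^K * (q:ℝ)^(3*K) := by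
          rw [← pow_add, ← pow_add]
          congr 1
          ring
      _ ≤ (q:ℝ)^K * (((3*K:ℕ):ℝ)^(3*K) * ((q:ℝ)^(2*K) * M)) := by
          refine mul_le_mul_of_nonneg_left ?_ hX1pos.le
          calc (q:ℝ)^(3*K) ≤ ((3*K:ℕ):ℝ)^(3*K) * (q.choose (3*K):ℝ) := hchoose
            _ ≤ ((3*K:ℕ):ℝ)^(3*K) * ((q:ℝ)^(2*K) * M) :=
                mul_le_mul_of_nonneg_left hA2 hT0
      _ = (((3*K:ℕ):ℝ)^(3*K) * (q:ℝ)^(2*K)) * ((q:ℝ)^K * M) := by ring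
      _ ≤ (((3*K:ℕ):ℝ)^(3*K) * (q:ℝ)^(2*K)) * (E.card:ℝ) :=
          mul_le_mul_of_nonneg_left hA3 (by positivity)
      _ ≤ ((q:ℝ) ^ (δ * (K:ℝ)) * (q:ℝ)^(2*K)) * (E.card:ℝ) :=
          mul_le_mul_of_nonneg_right (mul_le_mul_of_nonneg_right hexp hX2pos.le) hEc0
      _ = (q:ℝ)^(2*K) * ((q:ℝ) ^ (δ * (K:ℝ)) * (E.card:ℝ)) := by ring
  have hfin : (q:ℝ)^(2*K) ≤ (q:ℝ) ^ (δ * (K:ℝ)) * (E.card:ℝ) :=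
    le_of_mul_le_mul_left hstep hX2pos
  have hIPbound : ((q ^ K : ℝ) ^ (2 - δ)) / 2 ≤ (E.card : ℝ) := by
    have hgoal1 : ((q:ℝ)^K : ℝ) ^ (2-δ) = (q:ℝ) ^ (((2*K:ℕ):ℝ) - δ * (K:ℝ)) := by
      rw [← Real.rpow_natCast (q:ℝ) K, ← Real.rpow_mul hx0.le]
      congr 1
      push_cast
      ring
    rw [hgoal1, Real.rpow_sub hx0, Real.rpow_natCast]
    have hdivle : (q:ℝ)^(2*K) / (q:ℝ) ^ (δ*(K:ℝ)) ≤ (E.card:ℝ) := by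
      rw [div_le_iff₀ hDpos]
      linarith [hfin]
    have hnn : (0:ℝ) ≤ (q:ℝ)^(2*K) / (q:ℝ) ^ (δ*(K:ℝ)) := by positivity
    linarith
  -- assemble
  refine ⟨A, B, E, hAcard, hBcard, Finset.filter_subset _ _, hIPbound, ?_, ?_, ?_, ?_⟩
  · intro ab hab
    exact (Finset.mem_filter.1 hab).2
  · intro a ha b hb hnotE
    rw [hAdef] at ha
    rw [hBdef] at hb
    obtain ⟨c, -, rfl⟩ := Finset.mem_image.1 ha
    obtain ⟨c', -, rfl⟩ := Finset.mem_image.1 hb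
    refine lt_of_le_of_ne (hcross_le c c') ?_
    intro h
    refine hnotE (Finset.mem_filter.2 ⟨Finset.mem_product.2 ⟨?_, ?_⟩, h⟩)
    · rw [hAdef]
      exact Finset.mem_image_of_mem av (Finset.mem_univ c)
    · rw [hBdef]
      exact Finset.mem_image_of_mem bv (Finset.mem_univ c')
  · intro a ha a' ha' hne
    rw [hAdef] at ha ha'
    obtain ⟨c, -, rfl⟩ := Finset.mem_image.1 ha
    obtain ⟨c', -, rfl⟩ := Finset.mem_image.1 ha'
    exact hsameA c c' fun h => hne (congrArg av h)
  · intro b hb b' hb' hne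
    rw [hBdef] at hb hb'
    obtain ⟨c, -, rfl⟩ := Finset.mem_image.1 hb
    obtain ⟨c', -, rfl⟩ := Finset.mem_image.1 hb'
    exact hsameB c c' fun h => hne (congrArg bv h)

end Stmt10Aux


/-- the Reed–Solomon-based gadget for Maximum Inner Product: for
`0 < δ < 1` and a prime power `q ≥ 2` with `K = ⌊q^{0.3δ}/3⌋ ≥ 1`, taking `n = q^K`
and `d = q²`, there are sets `A, B ⊆ {0,1}^d` of size `n` and `E ⊆ A × B` with
`|E| ≥ n^{2-δ}/2` such that edges have inner product exactly `3K`, cross non-edges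
have inner product `< 3K`, and distinct same-side pairs have inner product `< K`. -/
theorem stmt_10 (δ : ℝ) (hδ0 : 0 < δ) (hδ1 : δ < 1)
    (q : ℕ) (hq : IsPrimePow q) (hq2 : 2 ≤ q)
    (K : ℕ) (hdef : K = ⌊(q : ℝ) ^ (0.3 * δ) / 3⌋₊) (hK1 : 1 ≤ K) :
    ∃ (A B : Finset (Fin (q ^ 2) → Bool))
      (E : Finset ((Fin (q ^ 2) → Bool) × (Fin (q ^ 2) → Bool))),
      A.card = q ^ K ∧ B.card = q ^ K ∧
      E ⊆ A ×ˢ B ∧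
      ((q ^ K : ℝ) ^ (2 - δ)) / 2 ≤ (E.card : ℝ) ∧
      (∀ ab ∈ E, boolIP ab.1 ab.2 = 3 * K) ∧
      (∀ a ∈ A, ∀ b ∈ B, (a, b) ∉ E → boolIP a b < 3 * K) ∧
      (∀ a ∈ A, ∀ a' ∈ A, a ≠ a' → boolIP a a' < K) ∧
      (∀ b ∈ B, ∀ b' ∈ B, b ≠ b' → boolIP b b' < K) := by
  classical
  have hq1 : (1:ℝ) ≤ q := by exact_mod_cast Nat.one_le_of_lt hq2
  have hx0 : (0:ℝ) < q := lt_of_lt_of_le one_pos hq1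
  have hKle : (K:ℝ) ≤ (q:ℝ) ^ (0.3*δ) / 3 := by
    have h := Nat.floor_le (show (0:ℝ) ≤ (q:ℝ) ^ (0.3*δ) / 3 by positivity)
    rw [← hdef] at h
    exact h
  have h3K : 3*(K:ℝ) ≤ (q:ℝ) ^ (0.3*δ) := by linarith
  have hK1R : (1:ℝ) ≤ (K:ℝ) := by exact_mod_cast hK1
  have h3 : (3:ℝ) ≤ (q:ℝ) ^ (0.3*δ) := by linarith
  have hmulexp : (q:ℝ) ^ (0.3*δ) * (q:ℝ) ^ (0.3*δ) = (q:ℝ) ^ (0.3*δ + 0.3*δ) :=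
    (Real.rpow_add hx0 _ _).symm
  have h6KR : 6*(K:ℝ) ≤ (q:ℝ) := by
    have h2 : 2*(3*(K:ℝ)) ≤ (q:ℝ) ^ (0.3*δ) * (q:ℝ) ^ (0.3*δ) := by nlinarith
    have h3' : (q:ℝ) ^ (0.3*δ + 0.3*δ) ≤ (q:ℝ) ^ (1:ℝ) :=
      Real.rpow_le_rpow_of_exponent_le hq1 (by linarith)
    rw [Real.rpow_one] at h3'
    rw [hmulexp] at h2
    linarith
  have h6K : 6*K ≤ q := by exact_mod_cast h6KR
  have hexp : ((3*K:ℕ):ℝ) ^ (3*K) ≤ (q:ℝ) ^ (δ*(K:ℝ)) := by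
    have hb : ((3*K:ℕ):ℝ) ≤ (q:ℝ) ^ (0.3*δ) := by push_cast; linarith
    have h1 : ((3*K:ℕ):ℝ) ^ (3*K) ≤ ((q:ℝ) ^ (0.3*δ)) ^ (3*K) :=
      pow_le_pow_left₀ (by positivity) hb _
    have h2 : ((q:ℝ) ^ (0.3*δ)) ^ (3*K) = (q:ℝ) ^ (0.3*δ * ((3*K:ℕ):ℝ)) := by
      rw [← Real.rpow_natCast ((q:ℝ) ^ (0.3*δ)) (3*K), ← Real.rpow_mul hx0.le]
    have h3' : (q:ℝ) ^ (0.3*δ * ((3*K:ℕ):ℝ)) ≤ (q:ℝ) ^ (δ*(K:ℝ)) := by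
      apply Real.rpow_le_rpow_of_exponent_le hq1
      push_cast
      nlinarith [mul_nonneg hδ0.le (show (0:ℝ) ≤ (K:ℝ) by linarith)]
    calc ((3*K:ℕ):ℝ) ^ (3*K) ≤ ((q:ℝ) ^ (0.3*δ)) ^ (3*K) := h1
      _ = (q:ℝ) ^ (0.3*δ * ((3*K:ℕ):ℝ)) := h2
      _ ≤ (q:ℝ) ^ (δ*(K:ℝ)) := h3'
  obtain ⟨p, m, hpp, hm, hqpm⟩ := hq
  haveI : Fact p.Prime := ⟨Nat.prime_iff.mpr hpp⟩
  haveI : Fintype (GaloisField p m) := Fintype.ofFinite _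
  have hFq : Fintype.card (GaloisField p m) = q := by
    rw [← Nat.card_eq_fintype_card, GaloisField.card p m hm.ne']
    exact hqpm
  exact Stmt10Aux.main (GaloisField p m) q K δ hFq hK1 h6K hq1 hexp
end

section
/- Let A and B be finite nonempty sets and let E_G, E_H ⊆ A × B. Then there exist bijections σ : A → A and ρ : B → B such that the cardinality of E_H ∩ {(σ(a), ρ(b)) : (a, b) ∈ E_G}, multiplied by |A| · |B|, is at least |E_G| · |E_H|. -/
open Finset Equiv

private lemma fiber_eq_aux {α : Type*} [Fintype α] [DecidableEq α] (a a' a'' : α) :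
    (univ.filter fun σ : Equiv.Perm α => σ a = a').card =
    (univ.filter fun σ : Equiv.Perm α => σ a = a'').card := by
  apply Finset.card_bij (fun σ _ => Equiv.swap a' a'' * σ)
  · intro σ hσ
    simp only [mem_filter, mem_univ, true_and] at hσ ⊢
    simp [Equiv.Perm.mul_apply, hσ]
  · intro σ₁ _ σ₂ _ h
    exact mul_left_cancel h
  · intro τ hτ
    simp only [mem_filter, mem_univ, true_and] at hτ
    refine ⟨Equiv.swap a' a'' * τ, ?_, ?_⟩
    · simp [Equiv.Perm.mul_apply, hτ, Equiv.swap_apply_right]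
    · rw [← mul_assoc, Equiv.swap_mul_self, one_mul]

private lemma fiber_mul_aux {α : Type*} [Fintype α] [DecidableEq α] (a a' : α) :
    (univ.filter fun σ : Equiv.Perm α => σ a = a').card * Fintype.card α =
    Fintype.card (Equiv.Perm α) := by
  have h : (Fintype.card (Equiv.Perm α)) =
      ∑ b : α, (univ.filter fun σ : Equiv.Perm α => σ a = b).card := by
    rw [← Finset.card_univ]
    exact Finset.card_eq_sum_card_fiberwise (fun σ _ => mem_univ _)
  rw [h, Finset.sum_congr rfl (fun b _ => fiber_eq_aux a b a'), Finset.sum_const,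
    smul_eq_mul, Finset.card_univ, mul_comm]

/-- for any two bipartite edge sets `E_G, E_H ⊆ A × B` over finite
nonempty parts, there is a side-preserving permutation `(σ, ρ)` such that the permuted
copy of `E_G` covers at least a `|E_G|/(|A|·|B|)` fraction of `E_H`. -/
theorem stmt_12 {A B : Type*} [Fintype A] [Fintype B] [DecidableEq A] [DecidableEq B]
    [Nonempty A] [Nonempty B]
    (EG EH : Finset (A × B)) :
    ∃ (σ : A ≃ A) (ρ : B ≃ B),
      EG.card * EH.card ≤
        (EH ∩ EG.image (fun p => (σ p.1, ρ p.2))).card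
          * (Fintype.card A * Fintype.card B) := by
  classical
  obtain ⟨a0⟩ := ‹Nonempty A›
  obtain ⟨b0⟩ := ‹Nonempty B›
  set KA := (univ.filter fun σ : Equiv.Perm A => σ a0 = a0).card with hKAdef
  set KB := (univ.filter fun ρ : Equiv.Perm B => ρ b0 = b0).card with hKBdef
  have hKA : ∀ a a' : A, (univ.filter fun σ : Equiv.Perm A => σ a = a').card = KA := by
    intro a a'
    exact Nat.eq_of_mul_eq_mul_right Fintype.card_pos
      (by rw [fiber_mul_aux, fiber_mul_aux])
  have hKB : ∀ b b' : B, (univ.filter fun ρ : Equiv.Perm B => ρ b = b').card = KB := by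
    intro b b'
    exact Nat.eq_of_mul_eq_mul_right Fintype.card_pos
      (by rw [fiber_mul_aux, fiber_mul_aux])
  have hKApos : 0 < KA := Finset.card_pos.mpr ⟨1, by simp⟩
  have hKBpos : 0 < KB := Finset.card_pos.mpr ⟨1, by simp⟩
  -- the value of a permutation pair
  set val : Equiv.Perm A × Equiv.Perm B → ℕ :=
    fun x => (EH ∩ EG.image (fun p => (x.1 p.1, x.2 p.2))).card with hvaldef
  have hval : ∀ x : Equiv.Perm A × Equiv.Perm B,
      val x = ∑ f ∈ EG, (if (x.1 f.1, x.2 f.2) ∈ EH then 1 else 0) := by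
    rintro ⟨σ, ρ⟩
    have hinj : Function.Injective (fun p : A × B => (σ p.1, ρ p.2)) := by
      rintro ⟨p1, p2⟩ ⟨q1, q2⟩ h
      simp only [Prod.mk.injEq] at h ⊢
      exact ⟨σ.injective h.1, ρ.injective h.2⟩
    have himg : EH ∩ EG.image (fun p => (σ p.1, ρ p.2)) =
        (EG.filter fun f => (σ f.1, ρ f.2) ∈ EH).image (fun p => (σ p.1, ρ p.2)) := by
      ext e
      simp only [mem_inter, mem_image, mem_filter]
      constructor
      · rintro ⟨he, f, hf, rfl⟩
        exact ⟨f, ⟨hf, he⟩, rfl⟩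
      · rintro ⟨f, ⟨hf, he⟩, rfl⟩
        exact ⟨he, f, hf, rfl⟩
    simp only [hvaldef]
    rw [himg, Finset.card_image_of_injective _ hinj, Finset.card_filter]
  -- the total sum
  have hsum : ∑ x : Equiv.Perm A × Equiv.Perm B, val x = EG.card * EH.card * (KA * KB) := by
    have key : ∀ (a : A) (b : B),
        ∑ σ : Equiv.Perm A, ∑ ρ : Equiv.Perm B, (if (σ a, ρ b) ∈ EH then 1 else 0)
          = EH.card * (KA * KB) := by
      intro a b
      have : ∀ σ : Equiv.Perm A, ∀ ρ : Equiv.Perm B,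
          (if (σ a, ρ b) ∈ EH then (1:ℕ) else 0)
            = ∑ e ∈ EH, if (σ a, ρ b) = e then 1 else 0 := by
        intro σ ρ
        rw [Finset.sum_ite_eq]
      simp_rw [this]
      rw [Finset.sum_congr rfl fun σ (_ : σ ∈ (univ : Finset (Equiv.Perm A))) =>
        (Finset.sum_comm : _ = ∑ e ∈ EH, ∑ ρ : Equiv.Perm B, _), Finset.sum_comm]
      have he : ∀ e ∈ EH,
          (∑ σ : Equiv.Perm A, ∑ ρ : Equiv.Perm B, if (σ a, ρ b) = e then (1:ℕ) else 0)
          = KA * KB := by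
        intro e _
        have : ∀ σ : Equiv.Perm A, ∀ ρ : Equiv.Perm B,
            (if (σ a, ρ b) = e then (1:ℕ) else 0)
              = (if σ a = e.1 then 1 else 0) * (if ρ b = e.2 then 1 else 0) := by
          intro σ ρ
          by_cases h1 : σ a = e.1 <;> by_cases h2 : ρ b = e.2 <;>
            simp [Prod.ext_iff, h1, h2]
        simp_rw [this, ← Finset.mul_sum, ← Finset.sum_mul]
        rw [← Finset.card_filter, ← Finset.card_filter, hKA, hKB]
      rw [Finset.sum_congr rfl he, Finset.sum_const, smul_eq_mul]
    calc ∑ x : Equiv.Perm A × Equiv.Perm B, val x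
        = ∑ σ : Equiv.Perm A, ∑ ρ : Equiv.Perm B, ∑ f ∈ EG,
            (if (σ f.1, ρ f.2) ∈ EH then 1 else 0) := by
          rw [Fintype.sum_prod_type]
          exact Finset.sum_congr rfl fun σ _ => Finset.sum_congr rfl fun ρ _ => hval (σ, ρ)
      _ = ∑ f ∈ EG, ∑ σ : Equiv.Perm A, ∑ ρ : Equiv.Perm B,
            (if (σ f.1, ρ f.2) ∈ EH then 1 else 0) := by
          rw [Finset.sum_congr rfl fun σ (_ : σ ∈ (univ : Finset (Equiv.Perm A))) =>
            (Finset.sum_comm : _ = ∑ f ∈ EG, ∑ ρ : Equiv.Perm B, _), Finset.sum_comm]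
      _ = ∑ f ∈ EG, EH.card * (KA * KB) := by
          exact Finset.sum_congr rfl fun f _ => key f.1 f.2
      _ = EG.card * EH.card * (KA * KB) := by
          rw [Finset.sum_const, smul_eq_mul, mul_assoc]
  -- averaging
  have hcardprod : Fintype.card (Equiv.Perm A × Equiv.Perm B)
      = (KA * Fintype.card A) * (KB * Fintype.card B) := by
    rw [Fintype.card_prod, ← fiber_mul_aux a0 a0, ← fiber_mul_aux b0 b0, hKA, hKB]
  have havg : ∑ _x : Equiv.Perm A × Equiv.Perm B, EG.card * EH.card * (KA * KB)
      ≤ ∑ x : Equiv.Perm A × Equiv.Perm B,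
          val x * ((KA * Fintype.card A) * (KB * Fintype.card B)) := by
    have h1 : ∑ x : Equiv.Perm A × Equiv.Perm B,
        val x * ((KA * Fintype.card A) * (KB * Fintype.card B))
        = (EG.card * EH.card * (KA * KB)) * ((KA * Fintype.card A) * (KB * Fintype.card B)) := by
      rw [← Finset.sum_mul, hsum]
    rw [h1, Finset.sum_const, smul_eq_mul, Finset.card_univ, hcardprod]
    exact le_of_eq (by ring)
  obtain ⟨x, -, hx⟩ := Finset.exists_le_of_sum_le Finset.univ_nonempty havg
  refine ⟨x.1, x.2, ?_⟩
  have hx' : EG.card * EH.card * (KA * KB)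
      ≤ val x * (Fintype.card A * Fintype.card B) * (KA * KB) := by
    calc EG.card * EH.card * (KA * KB)
        ≤ val x * ((KA * Fintype.card A) * (KB * Fintype.card B)) := hx
      _ = val x * (Fintype.card A * Fintype.card B) * (KA * KB) := by ring
  exact Nat.le_of_mul_le_mul_right hx' (Nat.mul_pos hKApos hKBpos)
end

section
/- Let A and B be finite sets with |A| = |B| = n ≥ 1 and let E ⊆ A × B be nonempty. Then there exist a natural number k with k ≤ 2n² · ln(n)/|E| + 1 and bijections σ₁, …, σ_k : A → A and ρ₁, …, ρ_k : B → B such that the union over i ∈ [k] of the sets {(σ_i(a), ρ_i(b)) : (a, b) ∈ E} equals A × B. -/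
/-!
Identify `A` and `B` with `ZMod n`, so that `A × B` becomes the group `G = ZMod n × ZMod n` of
order `n²` and translations of `G` are side-preserving permutations. Every point of `G` lies in
exactly `|E|` translates of `E`, so by averaging some translate covers a fraction `|E|/n²` of any
given set of points. Picking such translates greedily, the uncovered set shrinks by a factor
`1 - |E|/n² ≤ exp (-|E|/n²)` at each step, and after more than `n² log (n²) / |E|` steps fewer
than one point is left.
-/

open Finset Real

section GreedyCover

variable {ι X : Type*} [Fintype ι] [DecidableEq X] (T : ι → Finset X) {d : ℕ}

lemma sum_card_inter_eq_sum_card_filter_mem (U : Finset X) :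
    ∑ i, #(U ∩ T i) = ∑ x ∈ U, #{i | x ∈ T i} := by
  simp_rw [← filter_mem_eq_inter, card_filter]
  exact sum_comm

lemma exists_mul_card_le_card_mul_card_inter [Nonempty ι] (hT : ∀ x, d ≤ #{i | x ∈ T i})
    (U : Finset X) : ∃ i, d * #U ≤ Fintype.card ι * #(U ∩ T i) := by
  have hsum : ∑ _i : ι, d * #U ≤ ∑ i, Fintype.card ι * #(U ∩ T i) := by
    rw [sum_const, card_univ, smul_eq_mul, ← mul_sum, sum_card_inter_eq_sum_card_filter_mem,
      mul_comm d]
    gcongr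
    exact card_nsmul_le_sum U _ d fun x _ => hT x
  obtain ⟨i, -, hi⟩ := exists_le_of_sum_le univ_nonempty hsum
  exact ⟨i, hi⟩

lemma exists_card_sdiff_le_mul_exp [Nonempty ι] (hT : ∀ x, d ≤ #{i | x ∈ T i})
    (U : Finset X) : ∃ i, (#(U \ T i) : ℝ) ≤ #U * exp (-(d / Fintype.card ι)) := by
  obtain ⟨i, hi⟩ := exists_mul_card_le_card_mul_card_inter T hT U
  refine ⟨i, ?_⟩
  have hsplit : (#(U \ T i) : ℝ) = #U - #(U ∩ T i) := by
    rw [eq_sub_iff_add_eq]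
    exact_mod_cast card_sdiff_add_card_inter U (T i)
  have hfrac : (d / Fintype.card ι : ℝ) * #U ≤ #(U ∩ T i) := by
    have hi' : (d : ℝ) * #U ≤ Fintype.card ι * #(U ∩ T i) := by exact_mod_cast hi
    rw [div_mul_eq_mul_div, div_le_iff₀ (by exact_mod_cast Fintype.card_pos)]
    linarith
  calc (#(U \ T i) : ℝ) = #U - #(U ∩ T i) := hsplit
    _ ≤ #U * (-(d / Fintype.card ι) + 1) := by linarith
    _ ≤ #U * exp (-(d / Fintype.card ι)) := by gcongr; exact add_one_le_exp _

lemma exists_card_filter_forall_notMem_le [Fintype X] [Nonempty ι]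
    (hT : ∀ x, d ≤ #{i | x ∈ T i}) (k : ℕ) :
    ∃ i : Fin k → ι, (#{x | ∀ j, x ∉ T (i j)} : ℝ) ≤
      Fintype.card X * exp (-(d / Fintype.card ι * k)) := by
  induction k with
  | zero => exact ⟨Fin.elim0, by simp⟩
  | succ k ih =>
    obtain ⟨i, hi⟩ := ih
    obtain ⟨i₀, hi₀⟩ := exists_card_sdiff_le_mul_exp T hT {x | ∀ j, x ∉ T (i j)}
    refine ⟨(Fin.cons i₀ i : Fin (k + 1) → ι), ?_⟩
    have huncovered : univ.filter (fun x => ∀ j, x ∉ T ((Fin.cons i₀ i : Fin (k + 1) → ι) j)) =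
        univ.filter (fun x => ∀ j, x ∉ T (i j)) \ T i₀ := by
      ext x
      simp [Fin.forall_fin_succ, and_comm]
    rw [huncovered]
    calc _ ≤ _ := hi₀
      _ ≤ Fintype.card X * exp (-(d / Fintype.card ι * k)) * exp (-(d / Fintype.card ι)) := by
          gcongr
      _ = _ := by rw [mul_assoc, ← exp_add]; push_cast; ring_nf

theorem exists_biUnion_eq_univ_of_le_card_filter_mem [Fintype X] [Nonempty ι] (hd : 0 < d)
    (hT : ∀ x, d ≤ #{i | x ∈ T i}) :
    ∃ (k : ℕ) (i : Fin k → ι), (k : ℝ) ≤ Fintype.card ι * log (Fintype.card X) / d + 1 ∧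
      univ.biUnion (fun j => T (i j)) = univ := by
  set K : ℕ := ⌊(Fintype.card ι * log (Fintype.card X) / d : ℝ)⌋₊ + 1 with hK
  obtain ⟨i, hi⟩ := exists_card_filter_forall_notMem_le T hT K
  refine ⟨K, i, ?_, ?_⟩
  · push_cast [hK]
    gcongr
    exact Nat.floor_le (by positivity)
  have hlog : log (Fintype.card X) < d / Fintype.card ι * K := by
    have hd' : (0 : ℝ) < d := by exact_mod_cast hd
    rw [← div_lt_iff₀' (by positivity), div_div_eq_mul_div, mul_comm, hK]
    push_cast
    exact Nat.lt_floor_add_one _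
  have hsmall : (Fintype.card X : ℝ) * exp (-(d / Fintype.card ι * K)) < 1 := by
    rw [exp_neg, ← div_eq_mul_inv, div_lt_one (exp_pos _)]
    exact (le_exp_log _).trans_lt (exp_lt_exp.mpr hlog)
  have hempty : ({x | ∀ j, x ∉ T (i j)} : Finset X) = ∅ := by
    rw [← card_eq_zero, ← Nat.lt_one_iff]
    exact_mod_cast hi.trans_lt hsmall
  rw [eq_univ_iff_forall]
  intro x
  simpa using filter_eq_empty_iff.mp hempty (mem_univ x)

end GreedyCover

section Translates

variable {G : Type*} [AddGroup G] [Fintype G] [DecidableEq G]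

lemma card_filter_mem_map_addLeft (F : Finset G) (x : G) :
    #{g | x ∈ F.map (Equiv.addLeft g).toEmbedding} = #F := by
  refine card_nbij' (fun g => -g + x) (fun f => x - f) ?_ ?_ ?_ ?_ <;>
    simp [Set.MapsTo, Set.LeftInvOn, sub_eq_add_neg]

theorem exists_addLeft_biUnion_eq_univ (F : Finset G) (hF : F.Nonempty) :
    ∃ (k : ℕ) (g : Fin k → G), (k : ℝ) ≤ Fintype.card G * log (Fintype.card G) / #F + 1 ∧
      univ.biUnion (fun j => F.map (Equiv.addLeft (g j)).toEmbedding) = univ :=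
  exists_biUnion_eq_univ_of_le_card_filter_mem _ hF.card_pos
    fun x => (card_filter_mem_map_addLeft F x).ge

end Translates

/-- covering the complete bipartite graph by at most
`2n² ln(n)/|E| + 1` side-preserving permuted copies of a nonempty edge set `E`. -/
theorem stmt_13 {A B : Type*} [Fintype A] [Fintype B] [DecidableEq A] [DecidableEq B]
    (n : ℕ) (hn : 1 ≤ n) (hA : Fintype.card A = n) (hB : Fintype.card B = n)
    (E : Finset (A × B)) (hE : E.Nonempty) :
    ∃ (k : ℕ) (σ : Fin k → (A ≃ A)) (ρ : Fin k → (B ≃ B)),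
      (k : ℝ) ≤ 2 * (n : ℝ) ^ 2 * Real.log n / (E.card : ℝ) + 1 ∧
      (Finset.univ : Finset (Fin k)).biUnion
          (fun i => E.image (fun p => ((σ i) p.1, (ρ i) p.2)))
        = (Finset.univ : Finset (A × B)) := by
  have : NeZero n := ⟨by omega⟩
  obtain ⟨eA⟩ : Nonempty (A ≃ ZMod n) := Fintype.card_eq.mp (by rw [hA, ZMod.card])
  obtain ⟨eB⟩ : Nonempty (B ≃ ZMod n) := Fintype.card_eq.mp (by rw [hB, ZMod.card])
  set e := eA.prodCongr eB
  obtain ⟨k, g, hk, hcover⟩ := exists_addLeft_biUnion_eq_univ (E.map e.toEmbedding) (hE.map)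
  refine ⟨k, fun j => eA.symm.permCongr (Equiv.addLeft (g j).1),
    fun j => eB.symm.permCongr (Equiv.addLeft (g j).2), ?_, ?_⟩
  · have hG : Fintype.card (ZMod n × ZMod n) = n ^ 2 := by simp [ZMod.card, sq]
    rw [card_map, hG, Nat.cast_pow, log_pow] at hk
    convert hk using 2
    push_cast
    ring
  rw [eq_univ_iff_forall] at hcover ⊢
  intro x
  obtain ⟨j, -, hj⟩ := mem_biUnion.mp (hcover (e x))
  rw [mem_map_equiv, mem_map_equiv] at hj
  refine mem_biUnion.mpr ⟨j, mem_univ _, mem_image.mpr ⟨_, hj, ?_⟩⟩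
  simp [e]
end

section
/- There exist functions T_A, T_B : Bool → (Fin 5 → Bool) such that for every natural number d and all vectors a, b : Fin d → Bool, the Hamming distance between the vectors (i, j) ↦ T_A(a(i))(j) and (i, j) ↦ T_B(b(i))(j) in (Fin d × Fin 5 → Bool) equals 2d + 2 · |{i : a(i) = true and b(i) = true}|. In particular, this distance equals 2d if a and b are orthogonal (no coordinate where both are true), and is at least 2d + 2 otherwise. -/
/-- there are gadget maps `T_A, T_B : {0,1} → {0,1}^5` such that applying
them coordinate-wise to vectors `a, b : {0,1}^d` yields vectors in `{0,1}^{5d}` whose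
Hamming distance is `2d + 2·|{i : a i = b i = true}|`; in particular the distance is
`2d` if `a` and `b` are orthogonal and at least `2d + 2` otherwise. -/
theorem stmt_15 :
    ∃ TA TB : Bool → (Fin 5 → Bool),
      ∀ (d : ℕ) (a b : Fin d → Bool),
        hammingDist (fun p : Fin d × Fin 5 => TA (a p.1) p.2)
            (fun p : Fin d × Fin 5 => TB (b p.1) p.2)
          = 2 * d + 2 * (Finset.univ.filter
              (fun i : Fin d => a i = true ∧ b i = true)).card ∧
        ((∀ i : Fin d, ¬(a i = true ∧ b i = true)) →
          hammingDist (fun p : Fin d × Fin 5 => TA (a p.1) p.2)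
              (fun p : Fin d × Fin 5 => TB (b p.1) p.2) = 2 * d) ∧
        ((∃ i : Fin d, a i = true ∧ b i = true) →
          2 * d + 2 ≤ hammingDist (fun p : Fin d × Fin 5 => TA (a p.1) p.2)
              (fun p : Fin d × Fin 5 => TB (b p.1) p.2)) := by
  classical
  refine ⟨fun x => if x then ![true,true,false,true,true] else ![false,false,false,false,false],
          fun y => if y then ![false,false,true,true,false] else ![true,true,false,false,false],
          ?_⟩
  intro d a b
  set TA : Bool → Fin 5 → Bool :=
    fun x => if x then ![true,true,false,true,true] else ![false,false,false,false,false] with hTA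
  set TB : Bool → Fin 5 → Bool :=
    fun y => if y then ![false,false,true,true,false] else ![true,true,false,false,false] with hTB
  have key : ∀ x y : Bool,
      (Finset.univ.filter fun j : Fin 5 => TA x j ≠ TB y j).card
        = 2 + 2 * (if x = true ∧ y = true then 1 else 0) := by
    decide
  have main : hammingDist (fun p : Fin d × Fin 5 => TA (a p.1) p.2)
      (fun p : Fin d × Fin 5 => TB (b p.1) p.2)
      = 2 * d + 2 * (Finset.univ.filter
        (fun i : Fin d => a i = true ∧ b i = true)).card := by
    have h1 : hammingDist (fun p : Fin d × Fin 5 => TA (a p.1) p.2)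
        (fun p : Fin d × Fin 5 => TB (b p.1) p.2)
        = ∑ p : Fin d × Fin 5, if TA (a p.1) p.2 ≠ TB (b p.1) p.2 then 1 else 0 := by
      rw [hammingDist, Finset.card_filter]
    rw [h1, Fintype.sum_prod_type]
    have h2 : ∀ i : Fin d,
        (∑ j : Fin 5, if TA (a i) j ≠ TB (b i) j then 1 else 0)
          = 2 + 2 * (if a i = true ∧ b i = true then 1 else 0) := by
      intro i
      rw [← key (a i) (b i), Finset.card_filter]
    simp_rw [h2]
    rw [Finset.sum_add_distrib, Finset.sum_const, ← Finset.mul_sum,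
      Finset.card_univ, Fintype.card_fin, Finset.card_filter]
    ring
  refine ⟨main, ?_, ?_⟩
  · intro h
    rw [main]
    have : (Finset.univ.filter (fun i : Fin d => a i = true ∧ b i = true)) = ∅ := by
      apply Finset.filter_false_of_mem
      intro i _
      exact h i
    rw [this]
    simp
  · intro ⟨i, hi⟩
    rw [main]
    have : 1 ≤ (Finset.univ.filter (fun i : Fin d => a i = true ∧ b i = true)).card := by
      apply Finset.card_pos.mpr
      exact ⟨i, Finset.mem_filter.mpr ⟨Finset.mem_univ i, hi⟩⟩
    omega
end
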